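/- arXiv:1803.09147 — 6 statements merged into one kernel-verified Lean document; each statement's English description precedes it below -/
import Mathlib

section
/- Darboux's Théorème I (determined systems). Assume |I_α| = 1 for every α, say I_α = {i_α}, so Ξ_α = {x : x_{i_α} = x̄_{i_α}}. Assume each f_{i_α}^α : Ω × Υ → ℝ is uniformly bounded, continuous, and uniformly Lipschitz in its second argument, and each g_α : Ξ_α ∩ Ω → ℝ is C¹ and bounded with ḡ := (g_1(x̄),…,g_m(x̄)) ∈ Υ. Then there is an open neighborhood Ω̃ of x̄ on which there exists a unique continuous function u = (u_1,…,u_m) : Ω̃ → Υ such that for every α the partial derivative ∂_{x_{i_α}} u_α(x) exists and equals f_{i_α}^α(x, u(x)) at every x ∈ Ω̃, and u_α(x) = g_α(x) for every x ∈ Ξ_α ∩ Ω̃. -/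
open Set Function intervalIntegral
open scoped BoundedContinuousFunction NNReal

noncomputable def clampR (a δ t : ℝ) : ℝ := max (a - δ) (min (a + δ) t)

lemma clampR_continuous (a δ : ℝ) : Continuous (clampR a δ) :=
  continuous_const.max (continuous_const.min continuous_id)

lemma clampR_abs_le (a : ℝ) {δ : ℝ} (hδ : 0 ≤ δ) (t : ℝ) : |clampR a δ t - a| ≤ δ := by
  rw [abs_le]
  constructor
  · have : a - δ ≤ clampR a δ t := le_max_left _ _
    linarith
  · have : clampR a δ t ≤ a + δ := max_le (by linarith) (min_le_left _ _)
    linarith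

lemma clampR_eq_self (a : ℝ) {δ t : ℝ} (h : |t - a| ≤ δ) : clampR a δ t = t := by
  rw [abs_le] at h
  unfold clampR
  rw [min_eq_right (by linarith), max_eq_right (by linarith)]

lemma clampR_lipschitz (a δ : ℝ) (s t : ℝ) :
    |clampR a δ s - clampR a δ t| ≤ |s - t| := by
  unfold clampR
  rw [max_comm (a - δ) (min (a + δ) s), max_comm (a - δ) (min (a + δ) t)]
  refine (abs_max_sub_max_le_abs (min (a + δ) s) (min (a + δ) t) (a - δ)).trans ?_
  calc |min (a + δ) s - min (a + δ) t| ≤ max |a + δ - (a + δ)| |s - t| :=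
        abs_min_sub_min_le_max (a + δ) s (a + δ) t
    _ ≤ |s - t| := by simp

section Pi

variable {ι : Type*} [Fintype ι]

noncomputable def clampPi (a : ι → ℝ) (δ : ℝ) (x : ι → ℝ) : ι → ℝ :=
  fun i => clampR (a i) δ (x i)

omit [Fintype ι] in
lemma clampPi_continuous (a : ι → ℝ) (δ : ℝ) : Continuous (clampPi a δ) :=
  continuous_pi fun i => (clampR_continuous (a i) δ).comp (continuous_apply i)

lemma clampPi_mem (a : ι → ℝ) {δ : ℝ} (hδ : 0 ≤ δ) (x : ι → ℝ) :
    clampPi a δ x ∈ Metric.closedBall a δ := by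
  rw [Metric.mem_closedBall, dist_pi_le_iff hδ]
  intro i
  rw [Real.dist_eq]
  exact clampR_abs_le (a i) hδ (x i)

lemma clampPi_eq_self {a : ι → ℝ} {δ : ℝ} {x : ι → ℝ} (h : x ∈ Metric.closedBall a δ) :
    clampPi a δ x = x := by
  funext i
  refine clampR_eq_self (a i) ?_
  rw [← Real.dist_eq]
  exact (dist_le_pi_dist x a i).trans h

lemma clampPi_dist_le (a : ι → ℝ) (δ : ℝ) (x y : ι → ℝ) [Nonempty ι] :
    dist (clampPi a δ x) (clampPi a δ y) ≤ dist x y := by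
  rw [dist_pi_le_iff dist_nonneg]
  intro i
  rw [Real.dist_eq]
  exact (clampR_lipschitz (a i) δ (x i) (y i)).trans
    (by rw [← Real.dist_eq]; exact dist_le_pi_dist x y i)

lemma update_mem_closedBall [DecidableEq ι] {a x : ι → ℝ} {r : ℝ} {i : ι} {s : ℝ}
    (hx : x ∈ Metric.closedBall a r) (hs : |s - a i| ≤ r) :
    Function.update x i s ∈ Metric.closedBall a r := by
  have hr : 0 ≤ r := le_trans (abs_nonneg _) hs
  rw [Metric.mem_closedBall, dist_pi_le_iff hr]
  intro j
  rcases eq_or_ne j i with rfl | hj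
  · simpa [Real.dist_eq] using hs
  · simp only [Function.update_apply, if_neg hj]
    exact (dist_le_pi_dist x a j).trans hx

lemma update_mem_ball [DecidableEq ι] {a x : ι → ℝ} {r : ℝ} {i : ι} {s : ℝ}
    (hx : x ∈ Metric.ball a r) (hs : |s - a i| < r) :
    Function.update x i s ∈ Metric.ball a r := by
  have hr : 0 < r := lt_of_le_of_lt (abs_nonneg _) hs
  rw [Metric.mem_ball, dist_pi_lt_iff hr]
  intro j
  rcases eq_or_ne j i with rfl | hj
  · simpa [Real.dist_eq] using hs
  · simp only [Function.update_apply, if_neg hj]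
    exact lt_of_le_of_lt (dist_le_pi_dist x a j) hx

omit [Fintype ι] in
lemma continuous_update₂ [DecidableEq ι] {A : Type*} [TopologicalSpace A] (i : ι)
    {F : A → ι → ℝ} {G : A → ℝ} (hF : Continuous F) (hG : Continuous G) :
    Continuous fun a => Function.update (F a) i (G a) := by
  apply continuous_pi
  intro j
  rcases eq_or_ne j i with rfl | hj
  · simpa using hG
  · simp only [Function.update_apply, if_neg hj]
    exact (continuous_apply j).comp hF

end Pi

lemma abs_sub_le_of_mem_uIcc {a b s : ℝ} (h : s ∈ Set.uIcc a b) : |s - a| ≤ |b - a| := by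
  rcases le_total a b with hab | hab
  · rw [Set.uIcc_of_le hab] at h
    rw [abs_of_nonneg (by linarith [h.1]), abs_of_nonneg (by linarith)]
    linarith [h.2]
  · rw [Set.uIcc_of_ge hab] at h
    rw [abs_of_nonpos (by linarith [h.2]), abs_of_nonpos (by linarith)]
    linarith [h.1]

lemma add_smul_single {k : ℕ} (x : Fin k → ℝ) (i : Fin k) (t : ℝ) :
    x + t • (Pi.single i 1 : Fin k → ℝ) = Function.update x i (x i + t) := by
  funext j
  simp only [Pi.add_apply, Pi.smul_apply, Pi.single_apply, Function.update_apply, smul_eq_mul]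
  rcases eq_or_ne j i with rfl | hj
  · simp
  · simp [hj]

set_option maxHeartbeats 1600000 in
/-- **Darboux's Théorème I (determined systems).**
Fix `x̄ ∈ ℝⁿ`, an open `Ω ∋ x̄` and an open `Υ ⊆ ℝᵐ`.  For each `α` let
`I_α = {i_α}` be a singleton, so `Ξ_α = {x | x_{i_α} = x̄_{i_α}}`.  Assume each
`f^α := f^α_{i_α} : Ω × Υ → ℝ` is uniformly bounded, continuous, and uniformly
Lipschitz in its second argument, and each `g_α : Ξ_α ∩ Ω → ℝ` is `C¹` and
bounded with `ḡ = (g₁(x̄),…,g_m(x̄)) ∈ Υ`.  Then on some open neighborhood `Ω̃`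
of `x̄` there is a unique continuous `u : Ω̃ → Υ` with
`∂_{x_{i_α}} u_α(x) = f^α(x, u(x))` on `Ω̃` and `u_α = g_α` on `Ξ_α ∩ Ω̃`. -/
theorem darboux_theoreme_I
    (n m : ℕ) (xbar : Fin n → ℝ)
    (Ω : Set (Fin n → ℝ)) (Υ : Set (Fin m → ℝ))
    (hΩ : IsOpen Ω) (hxΩ : xbar ∈ Ω) (hΥ : IsOpen Υ)
    (idx : Fin m → Fin n)
    (f : Fin m → (Fin n → ℝ) → (Fin m → ℝ) → ℝ)
    (g : Fin m → (Fin n → ℝ) → ℝ)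
    (hfb : ∃ M : ℝ, ∀ α, ∀ x ∈ Ω, ∀ w ∈ Υ, |f α x w| ≤ M)
    (hfc : ∀ α, ContinuousOn (fun q : (Fin n → ℝ) × (Fin m → ℝ) => f α q.1 q.2) (Ω ×ˢ Υ))
    (hfl : ∃ L : ℝ, ∀ α, ∀ x ∈ Ω, ∀ w ∈ Υ, ∀ w' ∈ Υ,
      |f α x w - f α x w'| ≤ L * ‖w - w'‖)
    (hgC1 : ∀ α, ContDiffOn ℝ 1 (g α) ({x | x (idx α) = xbar (idx α)} ∩ Ω))
    (hgb : ∃ C : ℝ, ∀ α, ∀ x ∈ {x : Fin n → ℝ | x (idx α) = xbar (idx α)} ∩ Ω, |g α x| ≤ C)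
    (hgΥ : (fun α => g α xbar) ∈ Υ) :
    ∃ Ω' : Set (Fin n → ℝ), IsOpen Ω' ∧ xbar ∈ Ω' ∧ Ω' ⊆ Ω ∧
      ∃ u : (Fin n → ℝ) → (Fin m → ℝ),
        (ContinuousOn u Ω' ∧ (∀ x ∈ Ω', u x ∈ Υ) ∧
          (∀ α, ∀ x ∈ Ω',
            HasLineDerivAt ℝ (fun y => u y α) (f α x (u x)) x (Pi.single (idx α) 1)) ∧
          (∀ α, ∀ x ∈ Ω', x (idx α) = xbar (idx α) → u x α = g α x)) ∧
        ∀ v : (Fin n → ℝ) → (Fin m → ℝ),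
          (ContinuousOn v Ω' ∧ (∀ x ∈ Ω', v x ∈ Υ) ∧
            (∀ α, ∀ x ∈ Ω',
              HasLineDerivAt ℝ (fun y => v y α) (f α x (v x)) x (Pi.single (idx α) 1)) ∧
            (∀ α, ∀ x ∈ Ω', x (idx α) = xbar (idx α) → v x α = g α x)) →
          Set.EqOn u v Ω' := by
  classical
  obtain ⟨M₀, hM₀⟩ := hfb
  obtain ⟨L₀, hL₀⟩ := hfl
  obtain ⟨C₀, hC₀⟩ := hgb
  set M : ℝ := max M₀ 0 with hMdef
  have hM : ∀ α, ∀ x ∈ Ω, ∀ w ∈ Υ, |f α x w| ≤ M :=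
    fun α x hx w hw => (hM₀ α x hx w hw).trans (le_max_left _ _)
  have hMnn : (0:ℝ) ≤ M := le_max_right _ _
  set L : ℝ := max L₀ 0 with hLdef
  have hL : ∀ α, ∀ x ∈ Ω, ∀ w ∈ Υ, ∀ w' ∈ Υ, |f α x w - f α x w'| ≤ L * ‖w - w'‖ := by
    intro α x hx w hw w' hw'
    refine (hL₀ α x hx w hw w' hw').trans ?_
    exact mul_le_mul_of_nonneg_right (le_max_left _ _) (norm_nonneg _)
  have hLnn : (0:ℝ) ≤ L := le_max_right _ _
  set C : ℝ := max C₀ 0 with hCdef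
  have hC : ∀ α, ∀ x ∈ {x : Fin n → ℝ | x (idx α) = xbar (idx α)} ∩ Ω, |g α x| ≤ C :=
    fun α x hx => (hC₀ α x hx).trans (le_max_left _ _)
  have hCnn : (0:ℝ) ≤ C := le_max_right _ _
  set gbar : Fin m → ℝ := fun α => g α xbar with hgbardef
  obtain ⟨ε, hεpos, hballΥ⟩ : ∃ ε > 0, Metric.closedBall gbar ε ⊆ Υ := by
    obtain ⟨r, hr, h⟩ := Metric.isOpen_iff.1 hΥ gbar hgΥ
    exact ⟨r/2, by linarith, (Metric.closedBall_subset_ball (by linarith)).trans h⟩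
  obtain ⟨δ₀, hδ₀pos, hδ₀Ω⟩ : ∃ δ₀ > 0, Metric.closedBall xbar δ₀ ⊆ Ω := by
    obtain ⟨r, hr, h⟩ := Metric.isOpen_iff.1 hΩ xbar hxΩ
    exact ⟨r/2, by linarith, (Metric.closedBall_subset_ball (by linarith)).trans h⟩
  -- continuity of the boundary data map
  have hGcont : ContinuousOn
      (fun x => (fun α => g α (Function.update x (idx α) (xbar (idx α)))))
      (Metric.closedBall xbar δ₀) := by
    rw [continuousOn_pi]
    intro α
    refine ContinuousOn.comp ((hgC1 α).continuousOn)
      ((continuous_update₂ (idx α) continuous_id continuous_const).continuousOn) ?_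
    intro x hx
    exact ⟨Function.update_self _ _ _, hδ₀Ω (update_mem_closedBall hx (by simp [hδ₀pos.le]))⟩
  have hGxbar : (fun α => g α (Function.update xbar (idx α) (xbar (idx α)))) = gbar := by
    funext α
    rw [Function.update_eq_self]
  obtain ⟨δ₁, hδ₁pos, hδ₁⟩ : ∃ δ₁ > 0, ∀ y ∈ Metric.closedBall xbar δ₀,
      dist y xbar < δ₁ →
      dist (fun α => g α (Function.update y (idx α) (xbar (idx α)))) gbar < ε/2 := by
    have h := hGcont xbar (Metric.mem_closedBall_self hδ₀pos.le)
    rw [Metric.continuousWithinAt_iff] at h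
    obtain ⟨δ₁, hδ₁pos, h⟩ := h (ε/2) (by linarith)
    exact ⟨δ₁, hδ₁pos, fun y hy hyd => hGxbar ▸ h hy hyd⟩
  -- choice of δ
  obtain ⟨δ, hδpos, hδδ₀, hδδ₁, hδM, hδL⟩ :
      ∃ δ > 0, δ ≤ δ₀ ∧ δ < δ₁ ∧ M * δ ≤ ε/2 ∧ L * δ ≤ 1/2 := by
    refine ⟨min (min δ₀ (δ₁/2)) (min (ε/(2*(M+1))) (1/(2*(L+1)))), ?_, ?_, ?_, ?_, ?_⟩
    · positivity
    · exact le_trans (min_le_left _ _) (min_le_left _ _)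
    · exact lt_of_le_of_lt (le_trans (min_le_left _ _) (min_le_right _ _)) (by linarith)
    · have h1 : min (min δ₀ (δ₁/2)) (min (ε/(2*(M+1))) (1/(2*(L+1)))) ≤ ε/(2*(M+1)) :=
        le_trans (min_le_right _ _) (min_le_left _ _)
      have h2 : M * min (min δ₀ (δ₁/2)) (min (ε/(2*(M+1))) (1/(2*(L+1)))) ≤ M * (ε/(2*(M+1))) :=
        mul_le_mul_of_nonneg_left h1 hMnn
      refine h2.trans ?_
      calc M * (ε/(2*(M+1))) ≤ (M+1) * (ε/(2*(M+1))) :=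
            mul_le_mul_of_nonneg_right (by linarith) (by positivity)
        _ = ε/2 := by field_simp
    · have h1 : min (min δ₀ (δ₁/2)) (min (ε/(2*(M+1))) (1/(2*(L+1)))) ≤ 1/(2*(L+1)) :=
        le_trans (min_le_right _ _) (min_le_right _ _)
      have h2 : L * min (min δ₀ (δ₁/2)) (min (ε/(2*(M+1))) (1/(2*(L+1)))) ≤ L * (1/(2*(L+1))) :=
        mul_le_mul_of_nonneg_left h1 hLnn
      refine h2.trans ?_
      calc L * (1/(2*(L+1))) ≤ (L+1) * (1/(2*(L+1))) :=
            mul_le_mul_of_nonneg_right (by linarith) (by positivity)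
        _ = 1/2 := by field_simp
  set K : Set (Fin n → ℝ) := Metric.closedBall xbar δ with hKdef
  set Ω'' : Set (Fin n → ℝ) := Metric.ball xbar δ with hOdef
  have hΩ'K : Ω'' ⊆ K := Metric.ball_subset_closedBall
  have hKΩ : K ⊆ Ω := le_trans (Metric.closedBall_subset_closedBall hδδ₀) hδ₀Ω
  have hΩ'Ω : Ω'' ⊆ Ω := le_trans hΩ'K hKΩ
  have hGnear : ∀ x ∈ K, ∀ α, |g α (Function.update x (idx α) (xbar (idx α))) - gbar α| ≤ ε/2 := by
    intro x hx α
    have h := hδ₁ x (Metric.closedBall_subset_closedBall hδδ₀ hx) (lt_of_le_of_lt hx hδδ₁)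
    have h2 := (dist_le_pi_dist
      (fun α => g α (Function.update x (idx α) (xbar (idx α)))) gbar α).trans h.le
    rwa [Real.dist_eq] at h2
  -- the Picard operator
  set Φ : ((Fin n → ℝ) → (Fin m → ℝ)) → (Fin n → ℝ) → (Fin m → ℝ) := fun u x α =>
    g α (Function.update (clampPi xbar δ x) (idx α) (xbar (idx α))) +
      ∫ s in (xbar (idx α))..(clampR (xbar (idx α)) δ (x (idx α))),
        f α (Function.update (clampPi xbar δ x) (idx α) (clampR (xbar (idx α)) δ s))
          (clampPi gbar ε (u (Function.update (clampPi xbar δ x) (idx α) (clampR (xbar (idx α)) δ s))))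
    with hΦdef
  have hYK : ∀ (x : Fin n → ℝ) (i : Fin n) (s : ℝ),
      Function.update (clampPi xbar δ x) i (clampR (xbar i) δ s) ∈ K :=
    fun x i s => update_mem_closedBall (clampPi_mem xbar hδpos.le x) (clampR_abs_le _ hδpos.le s)
  have hPmem : ∀ (x : Fin n → ℝ) (α : Fin m),
      Function.update (clampPi xbar δ x) (idx α) (xbar (idx α)) ∈
        {y : Fin n → ℝ | y (idx α) = xbar (idx α)} ∩ Ω :=
    fun x α => ⟨Function.update_self _ _ _,
      hKΩ (update_mem_closedBall (clampPi_mem xbar hδpos.le x) (by simp [hδpos.le]))⟩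
  have hIcont : ∀ (α : Fin m) (u : (Fin n → ℝ) → (Fin m → ℝ)), Continuous u →
      Continuous (Function.uncurry (fun x s =>
        f α (Function.update (clampPi xbar δ x) (idx α) (clampR (xbar (idx α)) δ s))
          (clampPi gbar ε (u (Function.update (clampPi xbar δ x) (idx α)
            (clampR (xbar (idx α)) δ s)))))) := by
    intro α u hu
    have hY : Continuous (fun p : (Fin n → ℝ) × ℝ =>
        Function.update (clampPi xbar δ p.1) (idx α) (clampR (xbar (idx α)) δ p.2)) :=
      continuous_update₂ (idx α) ((clampPi_continuous xbar δ).comp continuous_fst)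
        ((clampR_continuous _ δ).comp continuous_snd)
    exact (hfc α).comp_continuous
      (hY.prodMk ((clampPi_continuous gbar ε).comp (hu.comp hY)))
      (fun p => ⟨hKΩ (hYK _ _ _), hballΥ (clampPi_mem gbar hεpos.le _)⟩)
  have hIbdd : ∀ (α : Fin m) (u : (Fin n → ℝ) → (Fin m → ℝ)) (x : Fin n → ℝ) (s : ℝ),
      |f α (Function.update (clampPi xbar δ x) (idx α) (clampR (xbar (idx α)) δ s))
        (clampPi gbar ε (u (Function.update (clampPi xbar δ x) (idx α)
          (clampR (xbar (idx α)) δ s))))| ≤ M :=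
    fun α u x s => hM α _ (hKΩ (hYK _ _ _)) _ (hballΥ (clampPi_mem gbar hεpos.le _))
  have hΦcont : ∀ u : (Fin n → ℝ) → (Fin m → ℝ), Continuous u → Continuous (Φ u) := by
    intro u hu
    apply continuous_pi
    intro α
    apply Continuous.add
    · exact (hgC1 α).continuousOn.comp_continuous
        (continuous_update₂ (idx α) (clampPi_continuous xbar δ) continuous_const)
        (fun x => hPmem x α)
    · exact intervalIntegral.continuous_parametric_intervalIntegral_of_continuous
        (hIcont α u hu) ((clampR_continuous _ δ).comp (continuous_apply (idx α)))
  have hΦbdd : ∀ (u : (Fin n → ℝ) → (Fin m → ℝ)) (x : Fin n → ℝ), ‖Φ u x‖ ≤ C + M * δ := by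
    intro u x
    rw [pi_norm_le_iff_of_nonneg (by positivity)]
    intro α
    rw [Real.norm_eq_abs]
    refine (abs_add_le _ _).trans (add_le_add (hC α _ (hPmem x α)) ?_)
    rw [← Real.norm_eq_abs]
    refine (intervalIntegral.norm_integral_le_of_norm_le_const (C := M)
      (fun s _ => by rw [Real.norm_eq_abs]; exact hIbdd α u x s)).trans ?_
    exact mul_le_mul_of_nonneg_left (clampR_abs_le _ hδpos.le _) hMnn
  have hintW : ∀ (α : Fin m) (u : (Fin n → ℝ) → (Fin m → ℝ)), Continuous u →
      ∀ (x : Fin n → ℝ) (a b : ℝ), IntervalIntegrable (fun s =>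
        f α (Function.update (clampPi xbar δ x) (idx α) (clampR (xbar (idx α)) δ s))
          (clampPi gbar ε (u (Function.update (clampPi xbar δ x) (idx α)
            (clampR (xbar (idx α)) δ s)))))
        MeasureTheory.volume a b := by
    intro α u hu x a b
    exact (Continuous.intervalIntegrable
      ((hIcont α u hu).comp (continuous_const.prodMk continuous_id)) a b)
  set T : ((Fin n → ℝ) →ᵇ (Fin m → ℝ)) → ((Fin n → ℝ) →ᵇ (Fin m → ℝ)) := fun u =>
    BoundedContinuousFunction.ofNormedAddCommGroup (Φ u) (hΦcont u u.continuous)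
      (C + M * δ) (hΦbdd u) with hTdef
  have hTapp : ∀ (u : (Fin n → ℝ) →ᵇ (Fin m → ℝ)) (x : Fin n → ℝ), T u x = Φ u x :=
    fun u x => rfl
  have hTlip : LipschitzWith (1/2 : ℝ≥0) T := by
    apply LipschitzWith.of_dist_le_mul
    intro u v
    have hc : ((1/2 : ℝ≥0) : ℝ) = 1/2 := by norm_num
    rw [hc, BoundedContinuousFunction.dist_le (by positivity)]
    intro x
    rw [dist_pi_le_iff (by positivity)]
    intro α
    have hne : Nonempty (Fin m) := ⟨α⟩
    rw [hTapp, hTapp, Real.dist_eq]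
    show |Φ u x α - Φ v x α| ≤ 1/2 * dist u v
    simp only [hΦdef]
    rw [add_sub_add_left_eq_sub,
      ← intervalIntegral.integral_sub (hintW α u u.continuous x _ _) (hintW α v v.continuous x _ _),
      ← Real.norm_eq_abs]
    refine (intervalIntegral.norm_integral_le_of_norm_le_const (C := L * dist u v) ?_).trans ?_
    · intro s hs
      rw [Real.norm_eq_abs]
      refine (hL α _ (hKΩ (hYK _ _ _)) _ (hballΥ (clampPi_mem gbar hεpos.le _)) _
        (hballΥ (clampPi_mem gbar hεpos.le _))).trans ?_
      refine mul_le_mul_of_nonneg_left ?_ hLnn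
      rw [← dist_eq_norm]
      exact (clampPi_dist_le gbar ε _ _).trans (BoundedContinuousFunction.dist_coe_le_dist _)
    · calc L * dist u v * |clampR (xbar (idx α)) δ (x (idx α)) - xbar (idx α)|
          ≤ L * dist u v * δ :=
            mul_le_mul_of_nonneg_left (clampR_abs_le _ hδpos.le _) (by positivity)
        _ = (L * δ) * dist u v := by ring
        _ ≤ 1/2 * dist u v := mul_le_mul_of_nonneg_right hδL dist_nonneg
  have hcontr : ContractingWith (1/2 : ℝ≥0) T := ⟨by rw [← NNReal.coe_lt_coe]; norm_num, hTlip⟩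
  set ub : (Fin n → ℝ) →ᵇ (Fin m → ℝ) := ContractingWith.fixedPoint T hcontr with hubdef
  have hfix : T ub = ub := ContractingWith.fixedPoint_isFixedPt hcontr
  set u : (Fin n → ℝ) → (Fin m → ℝ) := fun x => ub x with hudef
  have hueq : ∀ (x : Fin n → ℝ), u x = Φ u x :=
    fun x => (congrFun (congrArg DFunLike.coe hfix) x).symm
  -- elementary bound on coordinates in K
  have hxiK : ∀ x ∈ K, ∀ i : Fin n, |x i - xbar i| ≤ δ := by
    intro x hx i
    rw [← Real.dist_eq]
    exact (dist_le_pi_dist x xbar i).trans hx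
  have habs : ∀ a b c e1 e2 : ℝ, |a - c| ≤ e1 → |b| ≤ e2 → |a + b - c| ≤ e1 + e2 := by
    intro a b c e1 e2 h1 h2
    have h3 : a + b - c = (a - c) + b := by ring
    rw [h3]
    exact (abs_add_le _ _).trans (add_le_add h1 h2)
  -- the fixed point takes values in the closed ε-ball around gbar on K
  have huB : ∀ x ∈ K, u x ∈ Metric.closedBall gbar ε := by
    intro x hx
    rw [Metric.mem_closedBall, dist_pi_le_iff hεpos.le]
    intro α
    rw [Real.dist_eq, congrFun (hueq x) α]
    simp only [hΦdef]
    have h1 : |g α (Function.update (clampPi xbar δ x) (idx α) (xbar (idx α))) - gbar α|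
        ≤ ε/2 := by
      rw [clampPi_eq_self hx]
      exact hGnear x hx α
    have h2 : |∫ s in (xbar (idx α))..(clampR (xbar (idx α)) δ (x (idx α))),
        f α (Function.update (clampPi xbar δ x) (idx α) (clampR (xbar (idx α)) δ s))
          (clampPi gbar ε (u (Function.update (clampPi xbar δ x) (idx α)
            (clampR (xbar (idx α)) δ s))))| ≤ M * δ := by
      rw [← Real.norm_eq_abs]
      refine (intervalIntegral.norm_integral_le_of_norm_le_const (C := M)
        (fun s _ => by rw [Real.norm_eq_abs]; exact hIbdd α u x s)).trans ?_
      exact mul_le_mul_of_nonneg_left (clampR_abs_le _ hδpos.le _) hMnn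
    exact le_trans (habs _ _ _ _ _ h1 h2) (by linarith)
  -- the integral equation, in clean form, on K
  have hKint : ∀ x ∈ K, ∀ α, u x α = g α (Function.update x (idx α) (xbar (idx α)))
      + ∫ s in (xbar (idx α))..(x (idx α)),
          f α (Function.update x (idx α) s) (u (Function.update x (idx α) s)) := by
    intro x hx α
    rw [congrFun (hueq x) α]
    simp only [hΦdef]
    rw [clampPi_eq_self hx, clampR_eq_self _ (hxiK x hx (idx α))]
    congr 1
    apply intervalIntegral.integral_congr
    intro s hs
    have hs' : |s - xbar (idx α)| ≤ δ := (abs_sub_le_of_mem_uIcc hs).trans (hxiK x hx (idx α))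
    simp only [clampR_eq_self _ hs', clampPi_eq_self (huB _ (update_mem_closedBall hx hs'))]
  -- line derivatives of the fixed point
  have hline : ∀ α, ∀ x ∈ Ω'',
      HasLineDerivAt ℝ (fun y => u y α) (f α x (u x)) x (Pi.single (idx α) 1) := by
    intro α x hx
    have hxlt : ∀ j, |x j - xbar j| < δ := by
      intro j
      rw [← Real.dist_eq]
      exact lt_of_le_of_lt (dist_le_pi_dist x xbar j) hx
    set i := idx α with hidef
    set φ : ℝ → ℝ := fun s => f α (Function.update x i s) (u (Function.update x i s)) with hφdef
    have hupd : Continuous fun s' : ℝ => Function.update x i s' :=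
      continuous_update₂ i continuous_const continuous_id
    have hmemI : ∀ s ∈ Metric.ball (xbar i) δ, Function.update x i s ∈ Ω'' := by
      intro s hs
      exact update_mem_ball hx (by rw [← Real.dist_eq]; exact hs)
    have hφcont : ContinuousOn φ (Metric.ball (xbar i) δ) := by
      intro s hs
      apply ContinuousAt.continuousWithinAt
      have hyΩ : Function.update x i s ∈ Ω'' := hmemI s hs
      have hmem : (Function.update x i s, u (Function.update x i s)) ∈ Ω ×ˢ Υ :=
        ⟨hΩ'Ω hyΩ, hballΥ (huB _ (hΩ'K hyΩ))⟩
      have hinner : ContinuousAt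
          (fun s' : ℝ => (Function.update x i s', u (Function.update x i s'))) s :=
        (hupd.prodMk (ub.continuous.comp hupd)).continuousAt
      have houter : ContinuousAt (fun q : (Fin n → ℝ) × (Fin m → ℝ) => f α q.1 q.2)
          ((fun s' : ℝ => (Function.update x i s', u (Function.update x i s'))) s) := by
        exact (hfc α).continuousAt ((hΩ.prod hΥ).mem_nhds hmem)
      exact ContinuousAt.comp
        (f := fun s' : ℝ => (Function.update x i s', u (Function.update x i s')))
        houter hinner
    have hprim : ∀ s, |s - xbar i| ≤ δ → u (Function.update x i s) α =
        g α (Function.update x i (xbar i)) + ∫ t in (xbar i)..s, φ t := by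
      intro s hs
      have h := hKint (Function.update x i s) (update_mem_closedBall (hΩ'K hx) hs) α
      simpa [hφdef, ← hidef, Function.update_idem, Function.update_self] using h
    have hxiball : x i ∈ Metric.ball (xbar i) δ := by
      rw [Metric.mem_ball, Real.dist_eq]; exact hxlt i
    have hFTC : HasDerivAt (fun s => ∫ t in (xbar i)..s, φ t) (φ (x i)) (x i) := by
      refine intervalIntegral.integral_hasDerivAt_right
        ((hφcont.mono ?_).intervalIntegrable) ?_ ?_
      · intro t ht
        rw [Metric.mem_ball, Real.dist_eq]
        exact lt_of_le_of_lt (abs_sub_le_of_mem_uIcc ht) (hxlt i)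
      · exact ContinuousOn.stronglyMeasurableAtFilter Metric.isOpen_ball hφcont (x i) hxiball
      · exact hφcont.continuousAt (Metric.isOpen_ball.mem_nhds hxiball)
    have hh : HasDerivAt (fun s => u (Function.update x i s) α) (φ (x i)) (x i) := by
      refine HasDerivAt.congr_of_eventuallyEq
        (hFTC.const_add (g α (Function.update x i (xbar i)))) ?_
      filter_upwards [Metric.isOpen_ball.mem_nhds hxiball] with s hs
      rw [hprim s (le_of_lt (by rw [← Real.dist_eq]; exact hs))]
    have hcomp : HasDerivAt (fun t : ℝ => u (Function.update x i (x i + t)) α)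
        (φ (x i) * 1) 0 := by
      have h2 : HasDerivAt (fun t : ℝ => x i + t) 1 0 := by
        simpa using (hasDerivAt_id (0:ℝ)).const_add (x i)
      have h3 : HasDerivAt (fun s => u (Function.update x i s) α) (φ (x i)) (x i + 0) := by
        simpa using hh
      exact HasDerivAt.comp 0 h3 h2
    have hfinal : HasDerivAt
        (fun t : ℝ => u (x + t • (Pi.single i 1 : Fin n → ℝ)) α) (f α x (u x)) 0 := by
      have heq : (fun t : ℝ => u (x + t • (Pi.single i 1 : Fin n → ℝ)) α) =
          fun t : ℝ => u (Function.update x i (x i + t)) α := by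
        funext t
        rw [add_smul_single]
      rw [heq]
      have hval : φ (x i) * 1 = f α x (u x) := by
        rw [mul_one, hφdef]
        simp only []
        rw [Function.update_eq_self]
      rw [← hval]
      exact hcomp
    exact hfinal
  -- boundary values of the fixed point
  have hbdry : ∀ α, ∀ x ∈ Ω'', x (idx α) = xbar (idx α) → u x α = g α x := by
    intro α x hx hxi
    rw [hKint x (hΩ'K hx) α, hxi, intervalIntegral.integral_same, add_zero, ← hxi,
      Function.update_eq_self]
  -- continuity of the uniqueness-side integrand
  have hψcont : ∀ (α : Fin m) (w : (Fin n → ℝ) → (Fin m → ℝ)), ContinuousOn w Ω'' →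
      (∀ y ∈ Ω'', w y ∈ Υ) → ∀ x ∈ Ω'', ContinuousOn
        (fun s => f α (Function.update x (idx α) s) (w (Function.update x (idx α) s)))
        (Set.uIcc (xbar (idx α)) (x (idx α))) := by
    intro α w hwc hwΥ x hx
    have hxlt : ∀ j, |x j - xbar j| < δ := by
      intro j
      rw [← Real.dist_eq]
      exact lt_of_le_of_lt (dist_le_pi_dist x xbar j) hx
    intro s hs
    have hsδ : |s - xbar (idx α)| < δ :=
      lt_of_le_of_lt (abs_sub_le_of_mem_uIcc hs) (hxlt (idx α))
    have hy : Function.update x (idx α) s ∈ Ω'' := update_mem_ball hx hsδ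
    apply ContinuousAt.continuousWithinAt
    have hupd : Continuous fun s' : ℝ => Function.update x (idx α) s' :=
      continuous_update₂ (idx α) continuous_const continuous_id
    have hwca : ContinuousAt w (Function.update x (idx α) s) :=
      hwc.continuousAt (Metric.isOpen_ball.mem_nhds hy)
    have houter : ContinuousAt (fun q : (Fin n → ℝ) × (Fin m → ℝ) => f α q.1 q.2)
        ((fun s' : ℝ => (Function.update x (idx α) s',
          w (Function.update x (idx α) s'))) s) := by
      exact (hfc α).continuousAt ((hΩ.prod hΥ).mem_nhds ⟨hΩ'Ω hy, hwΥ _ hy⟩)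
    exact ContinuousAt.comp
      (f := fun s' : ℝ => (Function.update x (idx α) s', w (Function.update x (idx α) s')))
      houter (hupd.continuousAt.prodMk
        (ContinuousAt.comp (f := fun s' : ℝ => Function.update x (idx α) s')
          hwca hupd.continuousAt))
  -- conclusion
  refine ⟨Ω'', Metric.isOpen_ball, Metric.mem_ball_self hδpos, hΩ'Ω, u,
    ⟨ub.continuous.continuousOn, fun x hx => hballΥ (huB x (hΩ'K hx)), hline, hbdry⟩, ?_⟩
  rintro v ⟨hvc, hvΥ, hvd, hvb⟩
  -- integral equation for any solution v
  have hvint : ∀ x ∈ Ω'', ∀ α, v x α = g α (Function.update x (idx α) (xbar (idx α)))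
      + ∫ s in (xbar (idx α))..(x (idx α)),
          f α (Function.update x (idx α) s) (v (Function.update x (idx α) s)) := by
    intro x hx α
    set i := idx α with hidef
    have hxlt : ∀ j, |x j - xbar j| < δ := by
      intro j
      rw [← Real.dist_eq]
      exact lt_of_le_of_lt (dist_le_pi_dist x xbar j) hx
    set ψ : ℝ → ℝ := fun s => f α (Function.update x i s) (v (Function.update x i s)) with hψdef
    have hmemI : ∀ s, |s - xbar i| < δ → Function.update x i s ∈ Ω'' := fun s hs =>
      update_mem_ball hx hs
    have hderiv : ∀ s ∈ Set.uIcc (xbar i) (x i),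
        HasDerivAt (fun t => v (Function.update x i t) α) (ψ s) s := by
      intro s hs
      have hsδ : |s - xbar i| < δ := lt_of_le_of_lt (abs_sub_le_of_mem_uIcc hs) (hxlt i)
      have hy : Function.update x i s ∈ Ω'' := hmemI s hsδ
      have hld := hvd α _ hy
      have hld' : HasDerivAt (fun t : ℝ => v (Function.update x i (s + t)) α)
          (f α (Function.update x i s) (v (Function.update x i s))) 0 := by
        have heq : (fun t : ℝ =>
            v (Function.update x i s + t • (Pi.single i 1 : Fin n → ℝ)) α)
            = fun t : ℝ => v (Function.update x i (s + t)) α := by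
          funext t
          rw [add_smul_single, Function.update_idem, Function.update_self]
        rw [← heq]
        exact hld
      have h2 : HasDerivAt (fun t : ℝ => t - s) 1 s := by
        simpa using (hasDerivAt_id s).sub_const s
      have h3 : HasDerivAt (fun t : ℝ => v (Function.update x i (s + t)) α)
          (f α (Function.update x i s) (v (Function.update x i s))) (s - s) := by
        rw [sub_self]
        exact hld'
      have h4 := HasDerivAt.comp (h := fun t : ℝ => t - s) s h3 h2
      have heq2 : ((fun t : ℝ => v (Function.update x i (s + t)) α) ∘ fun t : ℝ => t - s)
          = fun t : ℝ => v (Function.update x i t) α := by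
        funext t
        show v (Function.update x i (s + (t - s))) α = _
        have hts : s + (t - s) = t := by ring
        rw [hts]
      rw [heq2] at h4
      simpa [hψdef] using h4
    have hcont : ContinuousOn ψ (Set.uIcc (xbar i) (x i)) := hψcont α v hvc hvΥ x hx
    have hFTC := intervalIntegral.integral_eq_sub_of_hasDerivAt hderiv hcont.intervalIntegrable
    rw [Function.update_eq_self] at hFTC
    have hb : v (Function.update x i (xbar i)) α = g α (Function.update x i (xbar i)) :=
      hvb α _ (hmemI _ (by simpa using hδpos)) (Function.update_self _ _ _)
    rw [hb] at hFTC
    linarith [hFTC]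
  -- Gronwall-type uniqueness on compact sub-balls
  intro z hz
  set r : ℝ := dist z xbar with hrdef
  have hr0 : (0:ℝ) ≤ r := dist_nonneg
  have hrδ : r < δ := hz
  set K' : Set (Fin n → ℝ) := Metric.closedBall xbar r with hK'def
  have hK'Ω' : K' ⊆ Ω'' := fun y hy => lt_of_le_of_lt hy hrδ
  have hK'c : IsCompact K' := isCompact_closedBall xbar r
  have hK'ne : K'.Nonempty := ⟨xbar, Metric.mem_closedBall_self hr0⟩
  have hdcont : ContinuousOn (fun y => dist (u y) (v y)) K' :=
    continuous_dist.comp_continuousOn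
      (ub.continuous.continuousOn.prodMk (hvc.mono hK'Ω'))
  obtain ⟨zs, hzsK, hzsmax⟩ := hK'c.exists_isMaxOn hK'ne hdcont
  set D : ℝ := dist (u zs) (v zs) with hDdef
  have hD0 : (0:ℝ) ≤ D := dist_nonneg
  have hbound : ∀ y ∈ K', dist (u y) (v y) ≤ (L * δ) * D := by
    intro y hy
    rw [dist_pi_le_iff (by positivity)]
    intro α
    have hyΩ' : y ∈ Ω'' := hK'Ω' hy
    have hIu : IntervalIntegrable
        (fun s => f α (Function.update y (idx α) s) (u (Function.update y (idx α) s)))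
        MeasureTheory.volume (xbar (idx α)) (y (idx α)) :=
      (hψcont α u ub.continuous.continuousOn
        (fun y' hy' => hballΥ (huB y' (hΩ'K hy'))) y hyΩ').intervalIntegrable
    have hIv : IntervalIntegrable
        (fun s => f α (Function.update y (idx α) s) (v (Function.update y (idx α) s)))
        MeasureTheory.volume (xbar (idx α)) (y (idx α)) :=
      (hψcont α v hvc hvΥ y hyΩ').intervalIntegrable
    rw [Real.dist_eq, hKint y (hΩ'K hyΩ') α, hvint y hyΩ' α, add_sub_add_left_eq_sub,
      ← intervalIntegral.integral_sub hIu hIv, ← Real.norm_eq_abs]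
    refine (intervalIntegral.norm_integral_le_of_norm_le_const (C := L * D) ?_).trans ?_
    · intro s hs
      have hs' : s ∈ Set.uIcc (xbar (idx α)) (y (idx α)) := Set.uIoc_subset_uIcc hs
      have hsr : |s - xbar (idx α)| ≤ r :=
        (abs_sub_le_of_mem_uIcc hs').trans
          (by rw [← Real.dist_eq]; exact dist_le_pi_dist y xbar (idx α) |>.trans hy)
      have hyK' : Function.update y (idx α) s ∈ K' := update_mem_closedBall hy hsr
      rw [Real.norm_eq_abs]
      refine (hL α _ (hΩ'Ω (hK'Ω' hyK')) _ (hballΥ (huB _ (hΩ'K (hK'Ω' hyK')))) _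
        (hvΥ _ (hK'Ω' hyK'))).trans ?_
      refine mul_le_mul_of_nonneg_left ?_ hLnn
      rw [← dist_eq_norm]
      exact hzsmax hyK'
    · have hyδ : |y (idx α) - xbar (idx α)| ≤ δ := hxiK y (hΩ'K hyΩ') (idx α)
      calc L * D * |y (idx α) - xbar (idx α)| ≤ L * D * δ :=
            mul_le_mul_of_nonneg_left hyδ (by positivity)
        _ = (L * δ) * D := by ring
  have hDD : D ≤ (L * δ) * D := hbound zs hzsK
  have h2 : (L * δ) * D ≤ (1/2) * D := mul_le_mul_of_nonneg_right hδL hD0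
  have hD : D = 0 := le_antisymm (by linarith) hD0
  have hz' : z ∈ K' := Metric.mem_closedBall.2 le_rfl
  have hzb := hbound z hz'
  rw [hD] at hzb
  have : dist (u z) (v z) ≤ 0 := by linarith [hzb]
  exact dist_le_zero.1 this
end

section
/- Instability dichotomy (failure of the SCC for the reversed data assignment). For every bounded open set U ⊆ ℝ² containing the origin, at least one of the following holds: (i) there exist y₀ < y₁ such that for every ȳ ∈ (y₀,y₁) the horizontal line ℝ × {ȳ} intersects U but the point (a·ȳ, ȳ) (its intersection with M) does not belong to U; or (ii) there exist x₀ < x₁ such that for every x̄ ∈ (x₀,x₁) the vertical line {x̄} × ℝ intersects U but the point (x̄, b·x̄) (its intersection with N) does not belong to U. -/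
/-- **Instability dichotomy** (failure of the SCC for the reversed data assignment).
Fix `a b : ℝ` with `0 < 1/a < b`, and let `M = {(x,y) | x = a*y}`,
`N = {(x,y) | y = b*x}`.  For every bounded open set `U ⊆ ℝ²` containing the origin,
either (i) there is an interval `(y₀,y₁)` such that for all `ȳ ∈ (y₀,y₁)` the
horizontal line `ℝ × {ȳ}` meets `U` but its intersection `(a*ȳ, ȳ)` with `M` is not
in `U`, or (ii) there is an interval `(x₀,x₁)` such that for all `x̄ ∈ (x₀,x₁)` the
vertical line `{x̄} × ℝ` meets `U` but its intersection `(x̄, b*x̄)` with `N` is not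
in `U`. -/
theorem instability_dichotomy
    (a b : ℝ) (ha : 0 < 1 / a) (hab : 1 / a < b)
    (U : Set (ℝ × ℝ)) (hUb : Bornology.IsBounded U) (hUo : IsOpen U)
    (hU0 : ((0 : ℝ), (0 : ℝ)) ∈ U) :
    (∃ y₀ y₁ : ℝ, y₀ < y₁ ∧ ∀ ybar ∈ Set.Ioo y₀ y₁,
        (∃ x : ℝ, (x, ybar) ∈ U) ∧ (a * ybar, ybar) ∉ U) ∨
    (∃ x₀ x₁ : ℝ, x₀ < x₁ ∧ ∀ xbar ∈ Set.Ioo x₀ x₁,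
        (∃ y : ℝ, (xbar, y) ∈ U) ∧ (xbar, b * xbar) ∉ U) := by
  by_contra hcon
  push_neg at hcon
  obtain ⟨h1, h2⟩ := hcon
  have ha' : 0 < a := one_div_pos.mp ha
  have hb : 0 < b := lt_trans ha hab
  have hab1 : 1 < a * b := by
    have := (div_lt_iff₀ ha').mp hab
    nlinarith
  set lam := (a * b + 1) / 2 with hlamdef
  have hlam1 : 1 < lam := by rw [hlamdef]; linarith
  have hlam0 : 0 < lam := by linarith
  -- Step lemma: from a point on M inside U, get a much higher point on M inside U.
  have step : ∀ y : ℝ, 0 < y → (a * y, y) ∈ U →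
      ∃ y', lam * y ≤ y' ∧ (a * y', y') ∈ U := by
    intro y hy hyU
    set δ := (a * b - 1) * y / 2 with hδdef
    have hab1' : 0 < a * b - 1 := by linarith
    have hδ : 0 < δ := by rw [hδdef]; positivity
    obtain ⟨r, hr, hball⟩ := Metric.isOpen_iff.mp hUo _ hyU
    set ε₁ := δ / (2 * b) with hε₁def
    have hε₁ : 0 < ε₁ := by positivity
    set r1 := min r ε₁ with hr1def
    have hr1 : 0 < r1 := lt_min hr hε₁
    have hr1r : r1 ≤ r := min_le_left _ _
    have hr1ε : r1 ≤ ε₁ := min_le_right _ _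
    obtain ⟨xbar, hxmem, hximp⟩ := h2 (a * y - r1) (a * y + r1) (by linarith)
    obtain ⟨hxl, hxr⟩ := hxmem
    have hxU : (xbar, y) ∈ U := by
      apply hball
      rw [Metric.mem_ball, Prod.dist_eq]
      simp only [Real.dist_eq, sub_self, abs_zero]
      have h1' : |xbar - a * y| < r1 := abs_lt.mpr ⟨by linarith, by linarith⟩
      exact max_lt (h1'.trans_le hr1r) hr
    have hN : (xbar, b * xbar) ∈ U := hximp ⟨y, hxU⟩
    obtain ⟨r', hr', hball'⟩ := Metric.isOpen_iff.mp hUo _ hN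
    set r2 := min r' (δ / 2) with hr2def
    have hr2 : 0 < r2 := lt_min hr' (by positivity)
    have hr2r : r2 ≤ r' := min_le_left _ _
    have hr2δ : r2 ≤ δ / 2 := min_le_right _ _
    obtain ⟨ybar, hymem, hyimp⟩ := h1 (b * xbar - r2) (b * xbar + r2) (by linarith)
    obtain ⟨hyl, hyr⟩ := hymem
    have hyU' : (xbar, ybar) ∈ U := by
      apply hball'
      rw [Metric.mem_ball, Prod.dist_eq]
      simp only [Real.dist_eq, sub_self, abs_zero]
      have h2' : |ybar - b * xbar| < r2 := abs_lt.mpr ⟨by linarith, by linarith⟩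
      exact max_lt hr' (h2'.trans_le hr2r)
    have hM : (a * ybar, ybar) ∈ U := hyimp ⟨xbar, hyU'⟩
    refine ⟨ybar, ?_, hM⟩
    -- ybar > b*xbar - r2 ≥ b*(a*y - ε₁) - δ/2 = a*b*y - δ = lam*y
    have hbε : b * ε₁ = δ / 2 := by
      rw [hε₁def]; field_simp
    have hx' : a * y - ε₁ < xbar := by linarith [hr1ε]
    have : b * (a * y - ε₁) ≤ b * xbar := by nlinarith
    have hδy : δ = (a * b - 1) * y / 2 := hδdef
    nlinarith [hr2δ, hyl]
  -- initial point on M inside U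
  obtain ⟨r0, hr0, hball0⟩ := Metric.isOpen_iff.mp hUo _ hU0
  set y0 := r0 / (2 * (a + 1)) with hy0def
  have hy0 : 0 < y0 := by rw [hy0def]; positivity
  have h0U : (a * y0, y0) ∈ U := by
    apply hball0
    rw [Metric.mem_ball, Prod.dist_eq]
    simp only [Real.dist_eq, sub_zero]
    have hay : |a * y0| = a * y0 := abs_of_pos (by positivity)
    have hyy : |y0| = y0 := abs_of_pos hy0
    rw [hay, hyy]
    have h2a : (0:ℝ) < 2 * (a + 1) := by positivity
    apply max_lt
    · rw [← mul_div_assoc, div_lt_iff₀ h2a]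
      nlinarith
    · rw [div_lt_iff₀ h2a]
      nlinarith
  -- iterate
  have key : ∀ n : ℕ, ∃ y, lam ^ n * y0 ≤ y ∧ (a * y, y) ∈ U := by
    intro n
    induction n with
    | zero => exact ⟨y0, by simp, h0U⟩
    | succ n ih =>
      obtain ⟨y, hy, hyU⟩ := ih
      have hypos : 0 < y := lt_of_lt_of_le (by positivity) hy
      obtain ⟨y', hy', hy'U⟩ := step y hypos hyU
      refine ⟨y', ?_, hy'U⟩
      calc lam ^ (n + 1) * y0 = lam * (lam ^ n * y0) := by ring
        _ ≤ lam * y := by nlinarith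
        _ ≤ y' := hy'
  obtain ⟨C, hC⟩ := hUb.exists_norm_le
  obtain ⟨n, hn⟩ := pow_unbounded_of_one_lt (C / y0) hlam1
  obtain ⟨y, hy, hyU⟩ := key n
  have hnorm : y ≤ C := by
    have h := hC _ hyU
    have h2' : ‖((a * y, y) : ℝ × ℝ).2‖ ≤ ‖((a * y, y) : ℝ × ℝ)‖ := norm_snd_le _
    calc y ≤ |y| := le_abs_self y
      _ ≤ C := le_trans h2' h
  have : C / y0 * y0 < lam ^ n * y0 := by nlinarith
  rw [div_mul_cancel₀ _ (ne_of_gt hy0)] at this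
  linarith
end

section
/- Failure of strong uniqueness without the SCC. For every bounded open set U ⊆ ℝ² containing the origin, there exist C¹ functions u, v : U → ℝ, not both identically zero, such that ∂_x u ≡ 0 and ∂_y v ≡ 0 on U, u(p) = 0 for every p ∈ M ∩ U, and v(p) = 0 for every p ∈ N ∩ U. In particular, the trivial system u_x = 0, v_y = 0 with identically vanishing data for u along M and for v along N admits, on every such U, a solution different from the zero solution. -/
/-- **Failure of strong uniqueness without the SCC.**
Fix `a b : ℝ` with `0 < 1/a < b`, and let `M = {(x,y) | x = a*y}`,
`N = {(x,y) | y = b*x}`.  For every bounded open set `U ⊆ ℝ²` containing the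
origin, there exist `C¹` functions `u v : U → ℝ`, not both identically zero on `U`,
with `∂ₓu ≡ 0` and `∂_y v ≡ 0` on `U`, `u = 0` on `M ∩ U`, and `v = 0` on `N ∩ U`.
Hence the trivial system `uₓ = 0`, `v_y = 0` with vanishing data for `u` along `M`
and for `v` along `N` admits on every such `U` a nonzero solution. -/
theorem failure_of_strong_uniqueness
    (a b : ℝ) (ha : 0 < 1 / a) (hab : 1 / a < b)
    (M N : Set (ℝ × ℝ))
    (hM : M = {p : ℝ × ℝ | p.1 = a * p.2})
    (hN : N = {p : ℝ × ℝ | p.2 = b * p.1})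
    (U : Set (ℝ × ℝ)) (hUb : Bornology.IsBounded U) (hUo : IsOpen U)
    (hU0 : ((0 : ℝ), (0 : ℝ)) ∈ U) :
    ∃ u v : ℝ × ℝ → ℝ,
      ContDiffOn ℝ 1 u U ∧ ContDiffOn ℝ 1 v U ∧
      ¬ (∀ p ∈ U, u p = 0 ∧ v p = 0) ∧
      (∀ p ∈ U, HasLineDerivAt ℝ u 0 p ((1 : ℝ), (0 : ℝ))) ∧
      (∀ p ∈ U, HasLineDerivAt ℝ v 0 p ((0 : ℝ), (1 : ℝ))) ∧
      (∀ p ∈ M ∩ U, u p = 0) ∧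
      (∀ p ∈ N ∩ U, v p = 0) := by
  have ha' : 0 < a := one_div_pos.mp ha
  have hab' : 1 < a * b := by
    have := (div_lt_iff₀ ha').mp hab  -- 1/a < b ↔ 1 < b * a
    nlinarith
  -- Key claim: some point of U has a "projection" escaping the closure of U.
  have hkey : ∃ p ∈ U, (a * p.2, p.2) ∉ closure U ∨ (p.1, b * p.1) ∉ closure U := by
    by_contra h
    push_neg at h
    -- extend stability to the closure
    have hMc : ∀ p ∈ closure U, (a * p.2, p.2) ∈ closure U := by
      intro p hp
      have hcont : Continuous fun q : ℝ × ℝ => (a * q.2, q.2) := by fun_prop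
      have h1 : (a * p.2, p.2) ∈ closure ((fun q : ℝ × ℝ => (a * q.2, q.2)) '' U) :=
        mem_closure_image hcont.continuousAt hp
      have h2 : (fun q : ℝ × ℝ => (a * q.2, q.2)) '' U ⊆ closure U := by
        rintro _ ⟨q, hq, rfl⟩
        exact (h q hq).1
      exact closure_minimal h2 isClosed_closure h1
    have hNc : ∀ p ∈ closure U, (p.1, b * p.1) ∈ closure U := by
      intro p hp
      have hcont : Continuous fun q : ℝ × ℝ => (q.1, b * q.1) := by fun_prop
      have h1 : (p.1, b * p.1) ∈ closure ((fun q : ℝ × ℝ => (q.1, b * q.1)) '' U) :=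
        mem_closure_image hcont.continuousAt hp
      have h2 : (fun q : ℝ × ℝ => (q.1, b * q.1)) '' U ⊆ closure U := by
        rintro _ ⟨q, hq, rfl⟩
        exact (h q hq).2
      exact closure_minimal h2 isClosed_closure h1
    -- find a point in U with positive first coordinate
    obtain ⟨r, hr, hball⟩ := Metric.isOpen_iff.mp hUo _ hU0
    have hmem : ((r / 2, 0) : ℝ × ℝ) ∈ U := by
      apply hball
      rw [Metric.mem_ball]
      have : dist ((r / 2, (0:ℝ)) : ℝ × ℝ) ((0:ℝ), (0:ℝ)) = r / 2 := by
        simp [Prod.dist_eq, Real.dist_eq, Prod.norm_def, Real.norm_eq_abs,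
          abs_of_nonneg (by linarith : (0:ℝ) ≤ r / 2)]
        rw [abs_of_pos hr, sup_eq_left.mpr (by linarith)]
      rw [this]; linarith
    -- iterate
    have hiter : ∀ n : ℕ, ∃ q ∈ closure U, q.1 = (a * b) ^ n * (r / 2) := by
      intro n
      induction n with
      | zero => exact ⟨(r / 2, 0), subset_closure hmem, by simp⟩
      | succ n ih =>
        obtain ⟨q, hq, hq1⟩ := ih
        refine ⟨(a * (b * q.1), b * q.1), hMc _ (hNc _ hq), ?_⟩
        simp only
        rw [hq1]; ring
    obtain ⟨R, hR⟩ := hUb.closure.exists_norm_le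
    obtain ⟨n, hn⟩ := pow_unbounded_of_one_lt (R / (r / 2)) hab'
    obtain ⟨q, hq, hq1⟩ := hiter n
    have h1 : ‖q.1‖ ≤ ‖q‖ := norm_fst_le q
    have h2 : ‖q‖ ≤ R := hR q hq
    have h3 : (a * b) ^ n * (r / 2) ≤ R := by
      calc (a * b) ^ n * (r / 2) = q.1 := hq1.symm
        _ ≤ |q.1| := le_abs_self _
        _ ≤ R := le_trans h1 h2
    have h4 : R / (r / 2) < (a * b) ^ n := hn
    have hr2 : 0 < r / 2 := by linarith
    rw [div_lt_iff₀ hr2] at h4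
    linarith
  obtain ⟨p, hpU, hp⟩ := hkey
  rcases hp with hp | hp
  · -- build u depending only on y, vanishing on {y | (a*y, y) ∈ closure U}
    set C : Set ℝ := {y : ℝ | (a * y, y) ∈ closure U} with hC
    have hCclosed : IsClosed C := by
      have : C = (fun y : ℝ => ((a * y, y) : ℝ × ℝ)) ⁻¹' closure U := rfl
      rw [this]
      exact isClosed_closure.preimage (by fun_prop)
    obtain ⟨f, hfsupp, hfsmooth, -⟩ := hCclosed.isOpen_compl.exists_contDiff_support_eq (n := ⊤)
    refine ⟨fun q => f q.2, 0, ?_, ?_, ?_, ?_, ?_, ?_, ?_⟩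
    · exact (((hfsmooth.of_le (mod_cast le_top)).comp contDiff_snd).contDiffOn)
    · exact contDiffOn_const
    · intro hall
      have := (hall p hpU).1
      have hpC : p.2 ∉ C := hp
      have : f p.2 ≠ 0 := by
        rw [← Function.mem_support, hfsupp]
        exact hpC
      exact this (hall p hpU).1
    · intro q hq
      have heq : (fun t : ℝ => f ((q + t • (((1:ℝ), (0:ℝ)) : ℝ × ℝ)).2)) = fun _ => f q.2 := by
        funext t; simp
      show HasDerivAt (fun t : ℝ => f ((q + t • (((1:ℝ), (0:ℝ)) : ℝ × ℝ)).2)) 0 0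
      rw [heq]
      exact hasDerivAt_const _ _
    · intro q hq
      show HasDerivAt (fun _ : ℝ => (0:ℝ)) 0 0
      exact hasDerivAt_const _ _
    · rintro q ⟨hqM, hqU⟩
      rw [hM] at hqM
      have : q.2 ∈ C := by
        show (a * q.2, q.2) ∈ closure U
        have : (a * q.2, q.2) = q := by
          ext <;> simp [hqM.symm]
        rw [this]
        exact subset_closure hqU
      have : q.2 ∉ Function.support f := by rw [hfsupp]; simpa using this
      simpa [Function.mem_support, not_not] using this
    · intro q hq; rfl
  · -- build v depending only on x, vanishing on {x | (x, b*x) ∈ closure U}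
    set C : Set ℝ := {x : ℝ | (x, b * x) ∈ closure U} with hC
    have hCclosed : IsClosed C := by
      have : C = (fun x : ℝ => ((x, b * x) : ℝ × ℝ)) ⁻¹' closure U := rfl
      rw [this]
      exact isClosed_closure.preimage (by fun_prop)
    obtain ⟨f, hfsupp, hfsmooth, -⟩ := hCclosed.isOpen_compl.exists_contDiff_support_eq (n := ⊤)
    refine ⟨0, fun q => f q.1, ?_, ?_, ?_, ?_, ?_, ?_, ?_⟩
    · exact contDiffOn_const
    · exact (((hfsmooth.of_le (mod_cast le_top)).comp contDiff_fst).contDiffOn)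
    · intro hall
      have hpC : p.1 ∉ C := hp
      have : f p.1 ≠ 0 := by
        rw [← Function.mem_support, hfsupp]
        exact hpC
      exact this (hall p hpU).2
    · intro q hq
      show HasDerivAt (fun _ : ℝ => (0:ℝ)) 0 0
      exact hasDerivAt_const _ _
    · intro q hq
      have heq : (fun t : ℝ => f ((q + t • (((0:ℝ), (1:ℝ)) : ℝ × ℝ)).1)) = fun _ => f q.1 := by
        funext t; simp
      show HasDerivAt (fun t : ℝ => f ((q + t • (((0:ℝ), (1:ℝ)) : ℝ × ℝ)).1)) 0 0
      rw [heq]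
      exact hasDerivAt_const _ _
    · intro q hq; rfl
    · rintro q ⟨hqN, hqU⟩
      rw [hN] at hqN
      have : q.1 ∈ C := by
        show (q.1, b * q.1) ∈ closure U
        have : (q.1, b * q.1) = q := by
          ext <;> simp [hqN.symm]
        rw [this]
        exact subset_closure hqU
      have : q.1 ∉ Function.support f := by rw [hfsupp]; simpa using this
      simpa [Function.mem_support, not_not] using this
end

section
/- Weak uniqueness for the trivial system with reversed data assignment. Let g : M → ℝ and h : N → ℝ be given functions. Suppose (u₁,v₁) and (u₂,v₂) are C¹ functions defined on open neighborhoods U₁ and U₂ of the origin in ℝ², respectively, each satisfying ∂_x u_i ≡ 0 and ∂_y v_i ≡ 0 on U_i, u_i = g on M ∩ U_i, and v_i = h on N ∩ U_i. Then there is an open neighborhood V of the origin with V ⊆ U₁ ∩ U₂ on which (u₁,v₁) = (u₂,v₂). -/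
/-- A function with zero line derivative in direction `v` along a segment from `q` to `q'`
(with `q' - q` a multiple of `v`) takes the same value at the endpoints. -/
lemma line_const {f : ℝ × ℝ → ℝ} {S : Set (ℝ × ℝ)} {v : ℝ × ℝ}
    (hf : ContinuousOn f S)
    (hd : ∀ p ∈ S, HasLineDerivAt ℝ f 0 p v)
    {q q' : ℝ × ℝ} (c : ℝ) (hw : q' - q = c • v)
    (hseg : segment ℝ q q' ⊆ S) : f q = f q' := by
  set w : ℝ × ℝ := q' - q with hwdef
  set ψ : ℝ → ℝ := fun t => f (q + t • w) with hψ
  have hmem : ∀ t ∈ Set.Icc (0:ℝ) 1, q + t • w ∈ S := by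
    intro t ht
    apply hseg
    rw [segment_eq_image']
    exact ⟨t, ht, rfl⟩
  have hcont : ContinuousOn ψ (Set.Icc (0:ℝ) 1) := by
    apply hf.comp (by fun_prop) hmem
  have hderiv : ∀ t ∈ Set.Ico (0:ℝ) 1, HasDerivWithinAt ψ 0 (Set.Ici t) t := by
    intro t ht
    have hptS : q + t • w ∈ S := hmem t ⟨ht.1, le_of_lt ht.2⟩
    have h1 : HasLineDerivAt ℝ f ((c : ℝ) • (0:ℝ)) (q + t • w) (c • v) :=
      (hd _ hptS).smul c
    rw [smul_zero, ← hw] at h1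
    -- h1 : HasDerivAt (fun s => f (q + t • w + s • w)) 0 0
    have h2 : HasDerivAt (fun s : ℝ => ψ (t + s)) 0 0 := by
      have : (fun s : ℝ => ψ (t + s)) = fun s : ℝ => f (q + t • w + s • w) := by
        funext s
        simp only [hψ, add_smul, add_assoc]
      rw [this]
      exact h1
    have h3 : HasDerivAt ψ 0 t := by
      have hinner : HasDerivAt (fun s : ℝ => s - t) 1 t := by
        simpa using (hasDerivAt_id t).sub_const t
      have h2' : HasDerivAt (fun s : ℝ => ψ (t + s)) 0 (t - t) := by
        show HasDerivAt (fun s : ℝ => ψ (t + s)) 0 (t - t)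
        rw [sub_self]; exact h2
      have h5 := h2'.comp (x := t) (h := fun s : ℝ => s - t) hinner
      have hcomp : (fun s : ℝ => ψ (t + s)) ∘ (fun s : ℝ => s - t) = ψ := by
        funext s; simp only [Function.comp_apply]; congr 1; ring
      rw [hcomp] at h5
      simpa using h5
    exact h3.hasDerivWithinAt
  have := constant_of_has_deriv_right_zero hcont hderiv 1 (by norm_num)
  simpa [hψ, hwdef] using this.symm

/-- **Weak uniqueness for the trivial system with reversed data assignment.**
Fix `a b : ℝ` with `0 < 1/a < b`, and let `M = {(x,y) | x = a*y}`,
`N = {(x,y) | y = b*x}`.  Let `g` (defined along `M`) and `h` (defined along `N`)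
be given.  If `(u₁,v₁)` on `U₁` and `(u₂,v₂)` on `U₂` are `C¹` solutions of
`∂ₓu ≡ 0`, `∂_y v ≡ 0` with `u = g` on `M ∩ Uᵢ` and `v = h` on `N ∩ Uᵢ`, where
`U₁, U₂` are open neighborhoods of the origin, then the two solutions agree on
some open neighborhood `V ⊆ U₁ ∩ U₂` of the origin. -/
theorem weak_uniqueness_reversed_data
    (a b : ℝ) (ha : 0 < 1 / a) (hab : 1 / a < b)
    (M N : Set (ℝ × ℝ))
    (hM : M = {p : ℝ × ℝ | p.1 = a * p.2})
    (hN : N = {p : ℝ × ℝ | p.2 = b * p.1})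
    (g h : ℝ × ℝ → ℝ)
    (U₁ U₂ : Set (ℝ × ℝ)) (hU₁ : IsOpen U₁) (hU₂ : IsOpen U₂)
    (hU₁0 : ((0 : ℝ), (0 : ℝ)) ∈ U₁) (hU₂0 : ((0 : ℝ), (0 : ℝ)) ∈ U₂)
    (u₁ v₁ u₂ v₂ : ℝ × ℝ → ℝ)
    (hu₁ : ContDiffOn ℝ 1 u₁ U₁) (hv₁ : ContDiffOn ℝ 1 v₁ U₁)
    (hu₂ : ContDiffOn ℝ 1 u₂ U₂) (hv₂ : ContDiffOn ℝ 1 v₂ U₂)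
    (hu₁x : ∀ p ∈ U₁, HasLineDerivAt ℝ u₁ 0 p ((1 : ℝ), (0 : ℝ)))
    (hv₁y : ∀ p ∈ U₁, HasLineDerivAt ℝ v₁ 0 p ((0 : ℝ), (1 : ℝ)))
    (hu₂x : ∀ p ∈ U₂, HasLineDerivAt ℝ u₂ 0 p ((1 : ℝ), (0 : ℝ)))
    (hv₂y : ∀ p ∈ U₂, HasLineDerivAt ℝ v₂ 0 p ((0 : ℝ), (1 : ℝ)))
    (hu₁g : ∀ p ∈ M ∩ U₁, u₁ p = g p) (hv₁h : ∀ p ∈ N ∩ U₁, v₁ p = h p)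
    (hu₂g : ∀ p ∈ M ∩ U₂, u₂ p = g p) (hv₂h : ∀ p ∈ N ∩ U₂, v₂ p = h p) :
    ∃ V : Set (ℝ × ℝ), IsOpen V ∧ ((0 : ℝ), (0 : ℝ)) ∈ V ∧ V ⊆ U₁ ∩ U₂ ∧
      Set.EqOn u₁ u₂ V ∧ Set.EqOn v₁ v₂ V := by
  obtain ⟨r, hr, hrU⟩ : ∃ r > 0, Metric.ball ((0:ℝ),(0:ℝ)) r ⊆ U₁ ∩ U₂ :=
    Metric.mem_nhds_iff.1 (Filter.inter_mem (hU₁.mem_nhds hU₁0) (hU₂.mem_nhds hU₂0))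
  have haa := abs_nonneg a
  have hbb := abs_nonneg b
  set C : ℝ := 1 + |a| + |b| with hC
  have hC1 : (1:ℝ) ≤ C := by rw [hC]; linarith
  have hCpos : (0:ℝ) < C := lt_of_lt_of_le one_pos hC1
  set ρ : ℝ := r / C with hρ
  have hρpos : 0 < ρ := div_pos hr hCpos
  have hρC : ρ * C = r := div_mul_cancel₀ r (ne_of_gt hCpos)
  have hρr : ρ ≤ r := by rw [hρ]; exact div_le_self hr.le hC1
  set B : Set (ℝ × ℝ) := Metric.ball ((0:ℝ),(0:ℝ)) r with hB
  refine ⟨Metric.ball ((0:ℝ),(0:ℝ)) ρ, Metric.isOpen_ball, Metric.mem_ball_self hρpos,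
    fun p hp => hrU (Metric.ball_subset_ball hρr hp), ?_, ?_⟩
  · -- u₁ = u₂
    intro p hp
    have hpnorm : ‖p‖ < ρ := by simpa [dist_eq_norm, show ((0:ℝ),(0:ℝ)) = 0 from rfl] using hp
    have hp2 : |p.2| ≤ ‖p‖ := by simpa [Real.norm_eq_abs] using norm_snd_le p
    have hpB : p ∈ B := by
      rw [hB, Metric.mem_ball]
      simpa [dist_eq_norm, show ((0:ℝ),(0:ℝ)) = 0 from rfl] using lt_of_lt_of_le hpnorm hρr
    set q : ℝ × ℝ := (a * p.2, p.2) with hq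
    have hqB : q ∈ B := by
      rw [hB, Metric.mem_ball]
      have h1 : ‖q‖ = max (|a| * |p.2|) |p.2| := by
        rw [hq, Prod.norm_def]; simp [Real.norm_eq_abs, abs_mul]
      have hy : |p.2| < ρ := lt_of_le_of_lt hp2 hpnorm
      have h2 : ‖q‖ < r := by
        rw [h1]
        apply max_lt
        · nlinarith [abs_nonneg p.2]
        · nlinarith
      simpa [dist_eq_norm, show ((0:ℝ),(0:ℝ)) = 0 from rfl] using h2
    have hseg : segment ℝ p q ⊆ B := (convex_ball _ _).segment_subset hpB hqB
    have hqM : q ∈ M := by rw [hM]; simp [hq]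
    have key : ∀ u : ℝ × ℝ → ℝ, ∀ U : Set (ℝ × ℝ), ContDiffOn ℝ 1 u U →
        (∀ z ∈ U, HasLineDerivAt ℝ u 0 z ((1:ℝ),(0:ℝ))) →
        B ⊆ U → u p = u q := by
      intro u U hu hux hBU
      apply line_const (hu.continuousOn.mono hBU)
        (fun z hz => hux z (hBU hz)) (a * p.2 - p.1)
      · rw [hq]; ext <;> simp
      · exact hseg
    have hBU₁ : B ⊆ U₁ := fun z hz => (hrU hz).1
    have hBU₂ : B ⊆ U₂ := fun z hz => (hrU hz).2
    have e1 : u₁ p = g q := by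
      rw [key u₁ U₁ hu₁ hu₁x hBU₁]; exact hu₁g q ⟨hqM, hBU₁ hqB⟩
    have e2 : u₂ p = g q := by
      rw [key u₂ U₂ hu₂ hu₂x hBU₂]; exact hu₂g q ⟨hqM, hBU₂ hqB⟩
    rw [e1, e2]
  · -- v₁ = v₂
    intro p hp
    have hpnorm : ‖p‖ < ρ := by simpa [dist_eq_norm, show ((0:ℝ),(0:ℝ)) = 0 from rfl] using hp
    have hp1 : |p.1| ≤ ‖p‖ := by simpa [Real.norm_eq_abs] using norm_fst_le p
    have hpB : p ∈ B := by
      rw [hB, Metric.mem_ball]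
      simpa [dist_eq_norm, show ((0:ℝ),(0:ℝ)) = 0 from rfl] using lt_of_lt_of_le hpnorm hρr
    set q : ℝ × ℝ := (p.1, b * p.1) with hq
    have hqB : q ∈ B := by
      rw [hB, Metric.mem_ball]
      have h1 : ‖q‖ = max |p.1| (|b| * |p.1|) := by
        rw [hq, Prod.norm_def]; simp [Real.norm_eq_abs, abs_mul]
      have hy : |p.1| < ρ := lt_of_le_of_lt hp1 hpnorm
      have h2 : ‖q‖ < r := by
        rw [h1]
        apply max_lt
        · nlinarith
        · nlinarith [abs_nonneg p.1]
      simpa [dist_eq_norm, show ((0:ℝ),(0:ℝ)) = 0 from rfl] using h2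
    have hseg : segment ℝ p q ⊆ B := (convex_ball _ _).segment_subset hpB hqB
    have hqN : q ∈ N := by rw [hN]; simp [hq]
    have key : ∀ v : ℝ × ℝ → ℝ, ∀ U : Set (ℝ × ℝ), ContDiffOn ℝ 1 v U →
        (∀ z ∈ U, HasLineDerivAt ℝ v 0 z ((0:ℝ),(1:ℝ))) →
        B ⊆ U → v p = v q := by
      intro v U hv hvy hBU
      apply line_const (hv.continuousOn.mono hBU)
        (fun z hz => hvy z (hBU hz)) (b * p.1 - p.2)
      · rw [hq]; ext <;> simp
      · exact hseg
    have hBU₁ : B ⊆ U₁ := fun z hz => (hrU hz).1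
    have hBU₂ : B ⊆ U₂ := fun z hz => (hrU hz).2
    have e1 : v₁ p = h q := by
      rw [key v₁ U₁ hv₁ hv₁y hBU₁]; exact hv₁h q ⟨hqN, hBU₁ hqB⟩
    have e2 : v₂ p = h q := by
      rw [key v₂ U₂ hv₂ hv₂y hBU₂]; exact hv₂h q ⟨hqN, hBU₂ hqB⟩
    rw [e1, e2]
end

section
/- Existence and strong uniqueness for the model system in the stable configuration. Let g and h be bounded C¹ real-valued functions of one variable defined on an open interval around 0. Then there is a bounded open neighborhood Ω̃ of the origin in ℝ² on which there exists a unique C¹ pair (u,v) : Ω̃ → ℝ² satisfying u_x = v and v_y = u on Ω̃, together with the data u(x, b·x) = g(x) whenever (x, b·x) ∈ Ω̃ (i.e. u prescribed along N) and v(a·y, y) = h(y) whenever (a·y, y) ∈ Ω̃ (i.e. v prescribed along M). -/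
open Set Metric MeasureTheory intervalIntegral Filter BoundedContinuousFunction

section helpers

noncomputable def pderivL (c d : ℝ) : (ℝ × ℝ) →L[ℝ] ℝ :=
  c • ContinuousLinearMap.fst ℝ ℝ ℝ + d • ContinuousLinearMap.snd ℝ ℝ ℝ

lemma pderivL_apply (c d : ℝ) (h : ℝ × ℝ) : pderivL c d h = c * h.1 + d * h.2 := by
  simp [pderivL]

lemma hasFDerivAt_of_partials {f fx fy : ℝ × ℝ → ℝ} {U : Set (ℝ × ℝ)} (hU : IsOpen U)
    (hx : ∀ p ∈ U, HasDerivAt (fun t => f (t, p.2)) (fx p) p.1)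
    (hy : ∀ p ∈ U, HasDerivAt (fun t => f (p.1, t)) (fy p) p.2)
    (hfx : ContinuousOn fx U) (hfy : ContinuousOn fy U) :
    ∀ p ∈ U, HasFDerivAt f (pderivL (fx p) (fy p)) p := by
  intro p hp
  rw [hasFDerivAt_iff_isLittleO_nhds_zero, Asymptotics.isLittleO_iff]
  intro ε hε
  -- choose r
  have hfxc : ContinuousAt fx p := hfx.continuousAt (hU.mem_nhds hp)
  have hfyc : ContinuousAt fy p := hfy.continuousAt (hU.mem_nhds hp)
  obtain ⟨r1, hr1, hball1⟩ := Metric.continuousAt_iff.1 hfxc (ε/2) (by linarith)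
  obtain ⟨r2, hr2, hball2⟩ := Metric.continuousAt_iff.1 hfyc (ε/2) (by linarith)
  obtain ⟨r3, hr3, hball3⟩ := Metric.isOpen_iff.1 hU p hp
  set r := min r1 (min r2 r3) with hr
  have hrpos : 0 < r := lt_min hr1 (lt_min hr2 hr3)
  filter_upwards [Metric.ball_mem_nhds (0 : ℝ × ℝ) hrpos] with h hh
  have hnorm : ‖h‖ < r := by simpa using hh
  have hmem : ∀ q : ℝ × ℝ, dist q p ≤ ‖h‖ →
      q ∈ U ∧ |fx q - fx p| ≤ ε / 2 ∧ |fy q - fy p| ≤ ε / 2 := by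
    intro q hq
    have h1 : dist q p < r1 := lt_of_le_of_lt hq (lt_of_lt_of_le hnorm (min_le_left _ _))
    have h2 : dist q p < r2 := lt_of_le_of_lt hq
      (lt_of_lt_of_le hnorm ((min_le_right _ _).trans (min_le_left _ _)))
    have h3 : dist q p < r3 := lt_of_le_of_lt hq
      (lt_of_lt_of_le hnorm ((min_le_right _ _).trans (min_le_right _ _)))
    refine ⟨hball3 h3, (le_of_lt ?_), (le_of_lt ?_)⟩
    · simpa [Real.dist_eq] using hball1 h1
    · simpa [Real.dist_eq] using hball2 h2
  have hh1 : |h.1| ≤ ‖h‖ := by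
    rw [Prod.norm_def]; simpa using le_max_left |h.1| |h.2|
  have hh2 : |h.2| ≤ ‖h‖ := by
    rw [Prod.norm_def]; simpa using le_max_right |h.1| |h.2|
  -- A term
  set s : Set ℝ := Metric.closedBall (0 : ℝ) ‖h‖ with hs
  have hs0 : (0 : ℝ) ∈ s := by simp [hs]
  have hsc : Convex ℝ s := convex_closedBall _ _
  have hdistq : ∀ t ∈ s, dist ((p.1 + t, p.2 + h.2) : ℝ × ℝ) p ≤ ‖h‖ := by
    intro t ht
    rw [Prod.dist_eq]
    simp only [Real.dist_eq, add_sub_cancel_left]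
    exact max_le (by simpa [Real.norm_eq_abs] using mem_closedBall_zero_iff.1 ht) hh2
  have hA : |(f (p.1 + h.1, p.2 + h.2) - h.1 * fx p) - f (p.1, p.2 + h.2)| ≤ ε/2 * ‖h‖ := by
    have key : ∀ t ∈ s, HasDerivWithinAt (fun t => f (p.1 + t, p.2 + h.2) - t * fx p)
        (fx (p.1 + t, p.2 + h.2) - fx p) s t := by
      intro t ht
      have hqU : ((p.1 + t, p.2 + h.2) : ℝ × ℝ) ∈ U := (hmem _ (hdistq t ht)).1
      have h1 := hx _ hqU
      have h2 : HasDerivAt (fun t' : ℝ => p.1 + t') 1 t := by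
        simpa using (hasDerivAt_id t).const_add p.1
      have h3 : HasDerivAt (fun t => f (p.1 + t, p.2 + h.2)) (fx (p.1 + t, p.2 + h.2)) t := by
        have := HasDerivAt.comp t (by exact h1) h2
        simpa [Function.comp_def] using this
      exact ((h3.sub (hasDerivAt_mul_const (fx p))).hasDerivWithinAt)
    have bound : ∀ t ∈ s, ‖fx (p.1 + t, p.2 + h.2) - fx p‖ ≤ ε/2 := by
      intro t ht
      simpa [Real.norm_eq_abs] using (hmem _ (hdistq t ht)).2.1
    have := hsc.norm_image_sub_le_of_norm_hasDerivWithin_le key bound hs0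
      (by simpa [hs] using hh1 : h.1 ∈ s)
    have h1n : ‖h.1 - 0‖ ≤ ‖h‖ := by simpa [Real.norm_eq_abs] using hh1
    have := le_trans this (mul_le_mul_of_nonneg_left h1n (by linarith : (0:ℝ) ≤ ε/2))
    simpa [Real.norm_eq_abs] using this
  have hB : |(f (p.1, p.2 + h.2) - h.2 * fy p) - f (p.1, p.2)| ≤ ε/2 * ‖h‖ := by
    have hdistq' : ∀ t ∈ s, dist ((p.1, p.2 + t) : ℝ × ℝ) p ≤ ‖h‖ := by
      intro t ht
      rw [Prod.dist_eq]
      simp only [Real.dist_eq, add_sub_cancel_left, sub_self, abs_zero]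
      exact max_le (norm_nonneg h) (by simpa [Real.norm_eq_abs] using mem_closedBall_zero_iff.1 ht)
    have key : ∀ t ∈ s, HasDerivWithinAt (fun t => f (p.1, p.2 + t) - t * fy p)
        (fy (p.1, p.2 + t) - fy p) s t := by
      intro t ht
      have hqU : ((p.1, p.2 + t) : ℝ × ℝ) ∈ U := (hmem _ (hdistq' t ht)).1
      have h1 := hy _ hqU
      have h2 : HasDerivAt (fun t' : ℝ => p.2 + t') 1 t := by
        simpa using (hasDerivAt_id t).const_add p.2
      have h3 : HasDerivAt (fun t => f (p.1, p.2 + t)) (fy (p.1, p.2 + t)) t := by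
        have := HasDerivAt.comp t (by exact h1) h2
        simpa [Function.comp_def] using this
      exact ((h3.sub (hasDerivAt_mul_const (fy p))).hasDerivWithinAt)
    have bound : ∀ t ∈ s, ‖fy (p.1, p.2 + t) - fy p‖ ≤ ε/2 := by
      intro t ht
      simpa [Real.norm_eq_abs] using (hmem _ (hdistq' t ht)).2.2
    have := hsc.norm_image_sub_le_of_norm_hasDerivWithin_le key bound hs0
      (by simpa [hs] using hh2 : h.2 ∈ s)
    have h2n : ‖h.2 - 0‖ ≤ ‖h‖ := by simpa [Real.norm_eq_abs] using hh2
    have := le_trans this (mul_le_mul_of_nonneg_left h2n (by linarith : (0:ℝ) ≤ ε/2))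
    simpa [Real.norm_eq_abs] using this
  have hsplit : f (p + h) - f p - pderivL (fx p) (fy p) h =
      ((f (p.1 + h.1, p.2 + h.2) - h.1 * fx p) - f (p.1, p.2 + h.2)) +
      ((f (p.1, p.2 + h.2) - h.2 * fy p) - f (p.1, p.2)) := by
    have : p + h = (p.1 + h.1, p.2 + h.2) := rfl
    rw [this, pderivL_apply]
    ring_nf
  rw [Real.norm_eq_abs, hsplit]
  calc |_ + _| ≤ _ + _ := abs_add_le _ _
    _ ≤ ε/2 * ‖h‖ + ε/2 * ‖h‖ := add_le_add hA hB
    _ = ε * ‖h‖ := by ring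

lemma contDiffOn_of_partials {f fx fy : ℝ × ℝ → ℝ} {U : Set (ℝ × ℝ)} (hU : IsOpen U)
    (hx : ∀ p ∈ U, HasDerivAt (fun t => f (t, p.2)) (fx p) p.1)
    (hy : ∀ p ∈ U, HasDerivAt (fun t => f (p.1, t)) (fy p) p.2)
    (hfx : ContinuousOn fx U) (hfy : ContinuousOn fy U) :
    ContDiffOn ℝ 1 f U := by
  have hd := hasFDerivAt_of_partials hU hx hy hfx hfy
  have h01 : (1 : WithTop ℕ∞) = 0 + 1 := (zero_add 1).symm
  rw [h01, contDiffOn_succ_iff_fderiv_of_isOpen hU]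
  refine ⟨fun p hp => (hd p hp).differentiableAt.differentiableWithinAt, by simp, ?_⟩
  rw [contDiffOn_zero]
  have hc : ContinuousOn (fun p => pderivL (fx p) (fy p)) U := by
    unfold pderivL
    exact (hfx.smul continuousOn_const).add (hfy.smul continuousOn_const)
  exact hc.congr fun p hp => (hd p hp).fderiv

lemma continuous_II {c : ℝ × ℝ → ℝ → ℝ} (hc : Continuous fun q : (ℝ × ℝ) × ℝ => c q.1 q.2)
    {e1 e2 : ℝ × ℝ → ℝ} (he1 : Continuous e1) (he2 : Continuous e2) :
    Continuous fun p => ∫ s in e1 p..e2 p, c p s := by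
  have hci : ∀ (p : ℝ × ℝ) (x y : ℝ), IntervalIntegrable (c p) volume x y := fun p x y =>
    (hc.comp (continuous_const.prodMk continuous_id)).intervalIntegrable x y
  have hA : ∀ e : ℝ × ℝ → ℝ, Continuous e →
      Continuous fun p : ℝ × ℝ => ∫ s in (0:ℝ)..e p, c p s := fun e he =>
    intervalIntegral.continuous_parametric_intervalIntegral_of_continuous hc he
  refine ((hA e2 he2).sub (hA e1 he1)).congr fun p => ?_
  rw [Pi.sub_apply, intervalIntegral.integral_interval_sub_left (hci p 0 (e2 p)) (hci p 0 (e1 p))]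

lemma hasDerivAt_primitive_right {k : ℝ → ℝ} (hk : Continuous k) (c y : ℝ) :
    HasDerivAt (fun t => ∫ s in c..t, k s) (k y) y :=
  intervalIntegral.integral_hasDerivAt_right (hk.intervalIntegrable _ _)
    (hk.stronglyMeasurableAtFilter _ _) hk.continuousAt

lemma hasDerivAt_param {F : ℝ → ℝ → ℝ} {F' : ℝ → ℝ} {x₀ c d C ε : ℝ} (hε : 0 < ε)
    (hcont : ∀ x, Continuous (F x)) (hF'cont : Continuous F')
    (hlip : ∀ t ∈ Set.uIoc c d, LipschitzOnWith (Real.nnabs C) (fun x => F x t) (Metric.ball x₀ ε))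
    (hdiff : ∀ t ∈ Set.uIoc c d, HasDerivAt (fun x => F x t) (F' t) x₀) :
    HasDerivAt (fun x => ∫ t in c..d, F x t) (∫ t in c..d, F' t) x₀ :=
  (intervalIntegral.hasDerivAt_integral_of_dominated_loc_of_lip (Metric.ball_mem_nhds x₀ hε)
    (Filter.Eventually.of_forall fun x => (hcont x).aestronglyMeasurable)
    ((hcont x₀).intervalIntegrable _ _)
    hF'cont.aestronglyMeasurable
    (Filter.Eventually.of_forall hlip)
    intervalIntegrable_const
    (Filter.Eventually.of_forall hdiff)).2

lemma abs_le_of_mem_uIcc {t x y m : ℝ} (ht : t ∈ Set.uIcc x y) (hx : |x| ≤ m) (hy : |y| ≤ m) :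
    |t| ≤ m := by
  rw [Set.uIcc_eq_union] at ht
  rcases ht with ht | ht <;> rw [Set.mem_Icc] at ht <;>
    cases' abs_le.1 hx with hx1 hx2 <;> cases' abs_le.1 hy with hy1 hy2 <;>
    exact abs_le.2 ⟨by linarith, by linarith⟩

end helpers

set_option maxHeartbeats 2000000 in
/-- **Existence and strong uniqueness for the model system `uₓ = v`, `v_y = u`
in the stable configuration.**
Fix `a b : ℝ` with `0 < 1/a < b`; `M = {(x,y) | x = a*y}`, `N = {(x,y) | y = b*x}`.
Let `g, h` be bounded `C¹` functions on an open interval `(-ρ,ρ)` around `0`.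
Then there is a bounded open neighborhood `Ω̃` of the origin on which there is a
unique `C¹` pair `(u,v)` with `uₓ = v`, `v_y = u` on `Ω̃`, `u(x, b x) = g(x)`
whenever `(x, b x) ∈ Ω̃` (data for `u` along `N`) and `v(a y, y) = h(y)` whenever
`(a y, y) ∈ Ω̃` (data for `v` along `M`). -/
theorem model_system_stable_existence_uniqueness
    (a b : ℝ) (ha : 0 < 1 / a) (hab : 1 / a < b)
    (ρ : ℝ) (hρ : 0 < ρ)
    (g h : ℝ → ℝ)
    (hg : ContDiffOn ℝ 1 g (Set.Ioo (-ρ) ρ)) (hh : ContDiffOn ℝ 1 h (Set.Ioo (-ρ) ρ))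
    (hgb : ∃ C : ℝ, ∀ x ∈ Set.Ioo (-ρ) ρ, |g x| ≤ C)
    (hhb : ∃ C : ℝ, ∀ y ∈ Set.Ioo (-ρ) ρ, |h y| ≤ C) :
    ∃ Ω : Set (ℝ × ℝ), IsOpen Ω ∧ ((0 : ℝ), (0 : ℝ)) ∈ Ω ∧ Bornology.IsBounded Ω ∧
      ∃ u v : ℝ × ℝ → ℝ,
        (ContDiffOn ℝ 1 u Ω ∧ ContDiffOn ℝ 1 v Ω ∧
          (∀ p ∈ Ω, HasLineDerivAt ℝ u (v p) p ((1 : ℝ), (0 : ℝ))) ∧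
          (∀ p ∈ Ω, HasLineDerivAt ℝ v (u p) p ((0 : ℝ), (1 : ℝ))) ∧
          (∀ x : ℝ, (x, b * x) ∈ Ω → u (x, b * x) = g x) ∧
          (∀ y : ℝ, (a * y, y) ∈ Ω → v (a * y, y) = h y)) ∧
        ∀ u' v' : ℝ × ℝ → ℝ,
          (ContDiffOn ℝ 1 u' Ω ∧ ContDiffOn ℝ 1 v' Ω ∧
            (∀ p ∈ Ω, HasLineDerivAt ℝ u' (v' p) p ((1 : ℝ), (0 : ℝ))) ∧
            (∀ p ∈ Ω, HasLineDerivAt ℝ v' (u' p) p ((0 : ℝ), (1 : ℝ))) ∧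
            (∀ x : ℝ, (x, b * x) ∈ Ω → u' (x, b * x) = g x) ∧
            (∀ y : ℝ, (a * y, y) ∈ Ω → v' (a * y, y) = h y)) →
          Set.EqOn u u' Ω ∧ Set.EqOn v v' Ω := by
  have ha0 : 0 < a := one_div_pos.mp ha
  have hb0 : 0 < b := lt_trans ha hab
  -- the small parameter δ
  set δ : ℝ := min (min (ρ/2) (a*ρ/2)) (1/(4*(b+1))) with hδdef
  have hδ : 0 < δ := by
    apply lt_min (lt_min (by linarith) (by positivity))
    positivity
  have hδρ : δ < ρ := by
    have := min_le_left (min (ρ/2) (a*ρ/2)) (1/(4*(b+1)))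
    have := min_le_left (ρ/2) (a*ρ/2)
    simp only [hδdef]
    calc min (min (ρ/2) (a*ρ/2)) (1/(4*(b+1))) ≤ min (ρ/2) (a*ρ/2) := min_le_left _ _
      _ ≤ ρ/2 := min_le_left _ _
      _ < ρ := by linarith
  have hδaρ : δ / a < ρ := by
    have h1 : δ ≤ a*ρ/2 := le_trans (min_le_left _ _) (min_le_right _ _)
    rw [div_lt_iff₀ ha0]
    nlinarith
  have hδ4 : 4*(b+1)*δ ≤ 1 := by
    have h1 : δ ≤ 1/(4*(b+1)) := min_le_right _ _
    rw [le_div_iff₀ (by positivity)] at h1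
    linarith [h1]
  have hk : 4*b*δ^2 < 1 := by nlinarith
  set β : ℝ := b * δ with hβdef
  have hβ : 0 < β := by positivity
  have hδaβ : δ / a < β := by
    rw [div_eq_mul_one_div]
    calc δ * (1/a) < δ * b := by nlinarith
      _ = β := by rw [hβdef]; ring
  have hδaβ' : δ / a ≤ β := le_of_lt hδaβ
  -- the domain
  set Ω : Set (ℝ × ℝ) := Set.Ioo (-δ) δ ×ˢ Set.Ioo (-β) β with hΩdef
  have hΩmem : ∀ p : ℝ × ℝ, p ∈ Ω ↔ |p.1| < δ ∧ |p.2| < β := by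
    intro p
    simp [hΩdef, Set.mem_prod, Set.mem_Ioo, abs_lt]
  have hΩopen : IsOpen Ω := isOpen_Ioo.prod isOpen_Ioo
  set R : Set (ℝ × ℝ) := Set.Icc (-δ) δ ×ˢ Set.Icc (-β) β with hRdef
  have hRmem : ∀ p : ℝ × ℝ, p ∈ R ↔ |p.1| ≤ δ ∧ |p.2| ≤ β := by
    intro p
    simp only [hRdef, Set.mem_prod, Set.mem_Icc, abs_le]
  have hΩR : Ω ⊆ R := fun p hp => by
    rw [hΩmem] at hp; rw [hRmem]; exact ⟨hp.1.le, hp.2.le⟩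
  have hRcomp : IsCompact R := isCompact_Icc.prod isCompact_Icc
  -- clamping
  set cl : ℝ → ℝ → ℝ := fun c x => max (-c) (min c x) with hcldef
  have hclabs : ∀ c x : ℝ, 0 ≤ c → |cl c x| ≤ c := by
    intro c x hc
    rw [abs_le]
    constructor
    · exact le_max_left _ _
    · exact max_le (by linarith) (min_le_left _ _)
  have hclid : ∀ c x : ℝ, |x| ≤ c → cl c x = x := by
    intro c x hx
    rw [abs_le] at hx
    simp only [hcldef]
    rw [min_eq_right hx.2, max_eq_right hx.1]
  have hclcont : ∀ c : ℝ, Continuous (cl c) :=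
    fun c => continuous_const.max (continuous_const.min continuous_id)
  set proj : ℝ × ℝ → ℝ × ℝ := fun p => (cl δ p.1, cl β p.2) with hprojdef
  have hprojcont : Continuous proj := ((hclcont δ).comp continuous_fst).prodMk
    ((hclcont β).comp continuous_snd)
  have hprojR : ∀ p, proj p ∈ R := fun p =>
    (hRmem _).2 ⟨hclabs δ p.1 hδ.le, hclabs β p.2 hβ.le⟩
  have hprojid : ∀ p ∈ R, proj p = p := by
    intro p hp
    rw [hRmem] at hp
    simp only [hprojdef]
    rw [hclid δ p.1 hp.1, hclid β p.2 hp.2]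
  -- clamped data
  set g₀ : ℝ → ℝ := fun z => g (cl δ z) with hg₀def
  set h₀ : ℝ → ℝ := fun z => h (cl (δ/a) z) with hh₀def
  have hg₀cont : Continuous g₀ := hg.continuousOn.comp_continuous (hclcont δ)
    (fun z => by
      have := hclabs δ z hδ.le
      rw [Set.mem_Ioo]
      constructor <;> [linarith [abs_le.1 this]; linarith [abs_le.1 this]])
  have hh₀cont : Continuous h₀ := hh.continuousOn.comp_continuous (hclcont (δ/a))
    (fun z => by
      have := hclabs (δ/a) z (by positivity)
      rw [Set.mem_Ioo]
      constructor <;> [linarith [abs_le.1 this]; linarith [abs_le.1 this]])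
  -- the fixed point operator
  set V : (ℝ × ℝ →ᵇ ℝ) → ℝ × ℝ → ℝ :=
    fun w p => h₀ (p.1/a) + ∫ s in (p.1/a)..p.2, w (proj (p.1, s)) with hVdef
  set F : (ℝ × ℝ →ᵇ ℝ) → ℝ × ℝ → ℝ :=
    fun w p => g₀ (p.2/b) + ∫ t in (p.2/b)..p.1, V w (t, p.2) with hFdef
  have hVcont : ∀ w, Continuous (V w) := by
    intro w
    apply Continuous.add (hh₀cont.comp (continuous_fst.div_const a))
    exact continuous_II (by fun_prop) (continuous_fst.div_const a) continuous_snd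
  have hFcont : ∀ w, Continuous (F w) := by
    intro w
    apply Continuous.add (hg₀cont.comp (continuous_snd.div_const b))
    exact continuous_II (c := fun p t => V w (t, p.2))
      (((hVcont w).comp (continuous_snd.prodMk (continuous_fst.snd))))
      (continuous_snd.div_const b) continuous_fst
  have hTex : ∀ w : ℝ × ℝ →ᵇ ℝ, ∃ Tw : ℝ × ℝ →ᵇ ℝ, ∀ p, Tw p = F w (proj p) := by
    intro w
    obtain ⟨C, hC⟩ := hRcomp.exists_bound_of_continuousOn ((hFcont w).continuousOn)
    exact ⟨BoundedContinuousFunction.ofNormedAddCommGroup _ ((hFcont w).comp hprojcont) C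
      (fun p => hC _ (hprojR p)), fun p => rfl⟩
  choose T hT using hTex
  -- |t| control on the outer integration interval
  have habs_int : ∀ (t : ℝ) (q : ℝ × ℝ), t ∈ Set.uIcc (q.2/b) q.1 → |q.1| ≤ δ → |q.2| ≤ β → |t| ≤ δ := by
    intro t q ht h1 h2
    refine abs_le_of_mem_uIcc ht ?_ h1
    rw [abs_div, abs_of_pos hb0, div_le_iff₀ hb0]
    calc |q.2| ≤ β := h2
      _ = δ * b := by rw [hβdef]; ring
  have hVdist : ∀ (w w' : ℝ × ℝ →ᵇ ℝ) (t y : ℝ), |t| ≤ δ → |y| ≤ β →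
      |V w (t, y) - V w' (t, y)| ≤ dist w w' * (2*β) := by
    intro w w' t y htd hyb
    have hint : ∀ w'' : ℝ × ℝ →ᵇ ℝ,
        IntervalIntegrable (fun s => w'' (proj (t, s))) volume (t/a) y := fun w'' =>
      (w''.continuous.comp (hprojcont.comp
        (continuous_const.prodMk continuous_id))).intervalIntegrable _ _
    have hsub : V w (t, y) - V w' (t, y)
        = ∫ s in (t/a)..y, (w (proj (t, s)) - w' (proj (t, s))) := by
      simp only [hVdef]
      rw [intervalIntegral.integral_sub (hint w) (hint w')]
      ring
    rw [hsub]
    have hb1 : ∀ s ∈ Set.uIoc (t/a) y, ‖w (proj (t, s)) - w' (proj (t, s))‖ ≤ dist w w' := by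
      intro s _
      rw [Real.norm_eq_abs, ← Real.dist_eq]
      exact BoundedContinuousFunction.dist_coe_le_dist _
    calc |∫ s in (t/a)..y, (w (proj (t, s)) - w' (proj (t, s)))|
        ≤ dist w w' * |y - t/a| := by
          simpa [Real.norm_eq_abs] using intervalIntegral.norm_integral_le_of_norm_le_const hb1
      _ ≤ dist w w' * (2*β) := by
          apply mul_le_mul_of_nonneg_left _ dist_nonneg
          have h1 : |t/a| ≤ δ/a := by
            rw [abs_div, abs_of_pos ha0]
            exact (div_le_div_iff_of_pos_right ha0).2 htd
          have habs2 : |y - t/a| ≤ |y| + |t/a| := by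
            simpa [sub_eq_add_neg, abs_neg] using abs_add_le y (-(t/a))
          linarith
  have hTlip : ∀ w w' : ℝ × ℝ →ᵇ ℝ, dist (T w) (T w') ≤ (4*b*δ^2) * dist w w' := by
    intro w w'
    rw [BoundedContinuousFunction.dist_le (by positivity)]
    intro p
    rw [hT, hT, Real.dist_eq]
    have hqR : proj p ∈ R := hprojR p
    have hq1 : |(proj p).1| ≤ δ := ((hRmem _).1 hqR).1
    have hq2 : |(proj p).2| ≤ β := ((hRmem _).1 hqR).2
    have hint : ∀ w'' : ℝ × ℝ →ᵇ ℝ,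
        IntervalIntegrable (fun t => V w'' (t, (proj p).2)) volume ((proj p).2/b) (proj p).1 :=
      fun w'' => ((hVcont w'').comp
        (continuous_id.prodMk continuous_const)).intervalIntegrable _ _
    have hsub : F w (proj p) - F w' (proj p)
        = ∫ t in ((proj p).2/b)..(proj p).1, (V w (t, (proj p).2) - V w' (t, (proj p).2)) := by
      simp only [hFdef]
      rw [intervalIntegral.integral_sub (hint w) (hint w')]
      ring
    rw [hsub]
    have hb2 : ∀ t ∈ Set.uIoc ((proj p).2/b) (proj p).1,
        ‖V w (t, (proj p).2) - V w' (t, (proj p).2)‖ ≤ dist w w' * (2*β) := by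
      intro t ht
      have htd : |t| ≤ δ := habs_int t (proj p) (Set.uIoc_subset_uIcc ht) hq1 hq2
      simpa [Real.norm_eq_abs] using hVdist w w' t (proj p).2 htd hq2
    calc |∫ t in ((proj p).2/b)..(proj p).1, (V w (t, (proj p).2) - V w' (t, (proj p).2))|
        ≤ (dist w w' * (2*β)) * |(proj p).1 - (proj p).2/b| := by
          simpa [Real.norm_eq_abs] using intervalIntegral.norm_integral_le_of_norm_le_const hb2
      _ ≤ 4*b*δ^2 * dist w w' := by
          have h1 : |(proj p).2/b| ≤ δ := by
            rw [abs_div, abs_of_pos hb0, div_le_iff₀ hb0]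
            calc |(proj p).2| ≤ β := hq2
              _ = δ * b := by rw [hβdef]; ring
          have habs2 : |(proj p).1 - (proj p).2/b| ≤ |(proj p).1| + |(proj p).2/b| := by
            simpa [sub_eq_add_neg, abs_neg] using abs_add_le (proj p).1 (-((proj p).2/b))
          have h2 : |(proj p).1 - (proj p).2/b| ≤ 2*δ := by linarith
          have h3 := mul_le_mul_of_nonneg_left h2
            (mul_nonneg dist_nonneg (by positivity) : (0:ℝ) ≤ dist w w' * (2*β))
          calc (dist w w' * (2*β)) * |(proj p).1 - (proj p).2/b|
              ≤ (dist w w' * (2*β)) * (2*δ) := h3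
            _ = 4*b*δ^2 * dist w w' := by rw [hβdef]; ring
  have hKlt : (Real.toNNReal (4*b*δ^2)) < 1 := by
    rw [← Real.toNNReal_one]
    exact (Real.toNNReal_lt_toNNReal_iff one_pos).2 hk
  have hcontr : ContractingWith (Real.toNNReal (4*b*δ^2)) T := by
    refine ⟨hKlt, LipschitzWith.of_dist_le_mul fun w w' => ?_⟩
    rw [Real.coe_toNNReal _ (by positivity)]
    exact hTlip w w'
  set u₀ : ℝ × ℝ →ᵇ ℝ := ContractingWith.fixedPoint T hcontr with hu₀def
  have hfixT : T u₀ = u₀ := hcontr.fixedPoint_isFixedPt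
  have hfix : ∀ p, u₀ p = F u₀ (proj p) := by
    intro p
    conv_lhs => rw [← hfixT]
    exact hT u₀ p
  set u : ℝ × ℝ → ℝ := ⇑u₀ with hudef
  set v : ℝ × ℝ → ℝ := V u₀ with hvdef
  have hucont : Continuous u := u₀.continuous
  have hvcont : Continuous v := hVcont u₀
  have huprojint : ∀ (x c d : ℝ), IntervalIntegrable (fun s => u (proj (x, s))) volume c d :=
    fun x c d => (hucont.comp (hprojcont.comp
      (continuous_const.prodMk continuous_id))).intervalIntegrable _ _
  have hvsliceint : ∀ (y c d : ℝ), IntervalIntegrable (fun t => v (t, y)) volume c d :=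
    fun y c d => (hvcont.comp (continuous_id.prodMk continuous_const)).intervalIntegrable _ _
  -- the fixed point equation on R
  have uEqR : ∀ p ∈ R, u p = g₀ (p.2/b) + ∫ t in (p.2/b)..p.1, v (t, p.2) := by
    intro p hp
    calc u p = F u₀ (proj p) := hfix p
      _ = F u₀ p := by rw [hprojid p hp]
      _ = g₀ (p.2/b) + ∫ t in (p.2/b)..p.1, v (t, p.2) := rfl
  -- primitives
  set ψ : ℝ × ℝ → ℝ := fun p => ∫ t in (0:ℝ)..p.1, v (t, p.2) with hψdef
  set χ : ℝ × ℝ → ℝ := fun p => ∫ s in (0:ℝ)..p.2, u (proj (p.1, s)) with hχdef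
  have hψx : ∀ p : ℝ × ℝ, HasDerivAt (fun t => ψ (t, p.2)) (v p) p.1 := fun p =>
    hasDerivAt_primitive_right (hvcont.comp (continuous_id.prodMk continuous_const)) 0 p.1
  have hvLip : ∀ t y1 y2 : ℝ, |v (t, y1) - v (t, y2)| ≤ ‖u₀‖ * |y1 - y2| := by
    intro t y1 y2
    have hsub : v (t, y1) - v (t, y2) = ∫ s in y2..y1, u (proj (t, s)) := by
      have h1 := intervalIntegral.integral_interval_sub_left
        (huprojint t (t/a) y1) (huprojint t (t/a) y2)
      simp only [hvdef, hVdef]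
      rw [← h1]
      ring_nf
      rfl
    have hbd : ∀ s ∈ Set.uIoc y2 y1, ‖u (proj (t, s))‖ ≤ ‖u₀‖ := fun s _ =>
      u₀.norm_coe_le_norm _
    calc |v (t, y1) - v (t, y2)| = |∫ s in y2..y1, u (proj (t, s))| := by rw [hsub]
      _ ≤ ‖u₀‖ * |y1 - y2| := by
          simpa [Real.norm_eq_abs] using intervalIntegral.norm_integral_le_of_norm_le_const hbd
  have hvslice : ∀ p : ℝ × ℝ, HasDerivAt (fun s => v (p.1, s)) (u (proj p)) p.2 := by
    intro p
    exact (hasDerivAt_primitive_right (hucont.comp (hprojcont.comp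
      (continuous_const.prodMk continuous_id))) (p.1/a) p.2).const_add (h₀ (p.1/a))
  have hψy : ∀ p : ℝ × ℝ,
      HasDerivAt (fun y => ψ (p.1, y)) (∫ t in (0:ℝ)..p.1, u (proj (t, p.2))) p.2 := by
    intro p
    apply hasDerivAt_param (C := ‖u₀‖) one_pos
    · intro y
      exact hvcont.comp (continuous_id.prodMk continuous_const)
    · exact hucont.comp (hprojcont.comp (continuous_id.prodMk continuous_const))
    · intro t _
      rw [lipschitzOnWith_iff_dist_le_mul]
      intro y1 _ y2 _
      rw [Real.dist_eq, Real.dist_eq, Real.coe_nnabs, abs_norm]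
      exact hvLip t y1 y2
    · intro t _
      exact hvslice (t, p.2)
  have hχy : ∀ p : ℝ × ℝ, HasDerivAt (fun y => χ (p.1, y)) (u (proj p)) p.2 := fun p =>
    hasDerivAt_primitive_right (hucont.comp (hprojcont.comp
      (continuous_const.prodMk continuous_id))) 0 p.2
  -- the key representation of u on R
  have uEqψ : ∀ p ∈ R, u p = g₀ (p.2/b) + (ψ p - ψ (p.2/b, p.2)) := by
    intro p hp
    rw [uEqR p hp]
    congr 1
    rw [← intervalIntegral.integral_interval_sub_left (hvsliceint p.2 0 p.1)
      (hvsliceint p.2 0 (p.2/b))]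
  have huslice : ∀ p ∈ Ω, HasDerivAt (fun t => u (t, p.2)) (v p) p.1 := by
    intro p hp
    obtain ⟨hp1, hp2⟩ := (hΩmem p).1 hp
    have hev : (fun t => u (t, p.2)) =ᶠ[nhds p.1]
        fun t => g₀ (p.2/b) + (ψ (t, p.2) - ψ (p.2/b, p.2)) := by
      filter_upwards [isOpen_Ioo.mem_nhds (abs_lt.1 hp1 : p.1 ∈ Set.Ioo (-δ) δ)] with t ht
      rw [Set.mem_Ioo] at ht
      exact uEqψ (t, p.2) ((hRmem _).2 ⟨(abs_lt.2 ht).le, hp2.le⟩)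
    rw [Filter.EventuallyEq.hasDerivAt_iff hev]
    simpa using ((hψx p).sub_const (ψ (p.2/b, p.2))).const_add (g₀ (p.2/b))
  -- bound for v on R
  obtain ⟨Cv, hCv⟩ := hRcomp.exists_bound_of_continuousOn hvcont.continuousOn
  have hχx : ∀ p ∈ Ω, HasDerivAt (fun x => χ (x, p.2)) (∫ s in (0:ℝ)..p.2, v (p.1, s)) p.1 := by
    intro p hp
    obtain ⟨hp1, hp2⟩ := (hΩmem p).1 hp
    have hε : 0 < δ - |p.1| := by linarith
    apply hasDerivAt_param (C := Cv) hε
    · intro x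
      exact hucont.comp (hprojcont.comp (continuous_const.prodMk continuous_id))
    · exact hvcont.comp (continuous_const.prodMk continuous_id)
    · intro t ht
      have htβ : |t| < β := by
        have h0 : |(0:ℝ)| ≤ |p.2| := by simp
        have := abs_le_of_mem_uIcc (Set.uIoc_subset_uIcc ht) h0 (le_refl _)
        linarith
      have hball : ∀ x ∈ Metric.ball p.1 (δ - |p.1|), ((x, t) : ℝ × ℝ) ∈ Ω := by
        intro x hx
        rw [Metric.mem_ball, Real.dist_eq] at hx
        rw [hΩmem]
        refine ⟨?_, htβ⟩
        calc |x| = |(x - p.1) + p.1| := by ring_nf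
          _ ≤ |x - p.1| + |p.1| := abs_add_le _ _
          _ < δ := by linarith
      apply (convex_ball p.1 (δ - |p.1|)).lipschitzOnWith_of_nnnorm_hasDerivWithin_le
        (f' := fun x => v (x, t))
      · intro x hx
        refine ((huslice (x, t) (hball x hx)).hasDerivWithinAt).congr ?_ ?_
        · intro y hy
          rw [hprojid _ (hΩR (hball y hy))]
        · rw [hprojid _ (hΩR (hball x hx))]
      · intro x hx
        have := hCv _ (hΩR (hball x hx))
        rw [← NNReal.coe_le_coe, coe_nnnorm, Real.coe_nnabs, Real.norm_eq_abs]
        exact le_trans this (le_abs_self _)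
    · intro t ht
      have htβ : |t| < β := by
        have h0 : |(0:ℝ)| ≤ |p.2| := by simp
        have := abs_le_of_mem_uIcc (Set.uIoc_subset_uIcc ht) h0 (le_refl _)
        linarith
      have hev : (fun x => u (proj (x, t))) =ᶠ[nhds p.1] (fun x => u (x, t)) := by
        filter_upwards [isOpen_Ioo.mem_nhds (abs_lt.1 hp1 : p.1 ∈ Set.Ioo (-δ) δ)] with x hx
        rw [Set.mem_Ioo] at hx
        rw [hprojid _ ((hRmem _).2 ⟨(abs_lt.2 hx).le, htβ.le⟩)]
      rw [Filter.EventuallyEq.hasDerivAt_iff hev]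
      exact huslice (p.1, t) ((hΩmem _).2 ⟨hp1, htβ⟩)
  -- C¹ regularity
  have hψC1 : ContDiffOn ℝ 1 ψ (Set.univ : Set (ℝ × ℝ)) := by
    apply contDiffOn_of_partials isOpen_univ (fun p _ => hψx p) (fun p _ => hψy p)
    · exact hvcont.continuousOn
    · exact (continuous_II (c := fun p t => u (proj (t, p.2)))
        (hucont.comp (hprojcont.comp (continuous_snd.prodMk continuous_fst.snd)))
        continuous_const continuous_fst).continuousOn
  have hχC1 : ContDiffOn ℝ 1 χ Ω := by
    apply contDiffOn_of_partials hΩopen (fun p hp => hχx p hp) (fun p _ => hχy p)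
    · exact (continuous_II (c := fun p s => v (p.1, s))
        (hvcont.comp (continuous_fst.fst.prodMk continuous_snd))
        continuous_const continuous_snd).continuousOn
    · exact (hucont.comp hprojcont).continuousOn
  have hmapg : ∀ p ∈ Ω, |p.2/b| < δ := by
    intro p hp
    obtain ⟨_, hp2⟩ := (hΩmem p).1 hp
    rw [abs_div, abs_of_pos hb0, div_lt_iff₀ hb0]
    calc |p.2| < β := hp2
      _ = δ * b := by rw [hβdef]; ring
  have hmaph : ∀ p ∈ Ω, |p.1/a| < δ/a := by
    intro p hp
    obtain ⟨hp1, _⟩ := (hΩmem p).1 hp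
    rw [abs_div, abs_of_pos ha0]
    exact (div_lt_div_iff_of_pos_right ha0).2 hp1
  have huC1 : ContDiffOn ℝ 1 u Ω := by
    have htarget : ContDiffOn ℝ 1 (fun p : ℝ × ℝ => g (p.2/b) + (ψ p - ψ (p.2/b, p.2))) Ω := by
      apply ContDiffOn.add
      · apply hg.comp ((contDiff_snd.div_const b).contDiffOn)
        intro p hp
        have := hmapg p hp
        rw [Set.mem_Ioo]
        constructor <;> [linarith [abs_lt.1 this]; linarith [abs_lt.1 this]]
      · apply ContDiffOn.sub (hψC1.mono (Set.subset_univ _))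
        exact (hψC1.comp (((contDiff_snd.div_const b).prodMk contDiff_snd).contDiffOn)
          (Set.mapsTo_univ _ _))
    apply htarget.congr
    intro p hp
    rw [uEqψ p (hΩR hp)]
    have : g₀ (p.2/b) = g (p.2/b) := by
      simp only [hg₀def]
      rw [hclid δ _ (hmapg p hp).le]
    rw [this]
  have hvC1 : ContDiffOn ℝ 1 v Ω := by
    have hsplit : ∀ p : ℝ × ℝ, v p = h₀ (p.1/a) + (χ p - χ (p.1, p.1/a)) := by
      intro p
      have h1 := intervalIntegral.integral_interval_sub_left
        (huprojint p.1 0 p.2) (huprojint p.1 0 (p.1/a))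
      simp only [hvdef, hVdef, hχdef]
      rw [← h1]
    have htarget : ContDiffOn ℝ 1
        (fun p : ℝ × ℝ => h (p.1/a) + (χ p - χ (p.1, p.1/a))) Ω := by
      apply ContDiffOn.add
      · apply hh.comp ((contDiff_fst.div_const a).contDiffOn)
        intro p hp
        have := lt_trans (hmaph p hp) hδaρ
        rw [Set.mem_Ioo]
        constructor <;> [linarith [abs_lt.1 this]; linarith [abs_lt.1 this]]
      · apply ContDiffOn.sub hχC1
        apply hχC1.comp ((contDiff_fst.prodMk (contDiff_fst.div_const a)).contDiffOn)
        intro p hp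
        obtain ⟨hp1, _⟩ := (hΩmem p).1 hp
        rw [hΩmem]
        exact ⟨hp1, lt_trans (hmaph p hp) hδaβ⟩
    apply htarget.congr
    intro p hp
    rw [hsplit p]
    have : h₀ (p.1/a) = h (p.1/a) := by
      simp only [hh₀def]
      rw [hclid (δ/a) _ (hmaph p hp).le]
    rw [this]
  -- line derivatives
  have hline_u : ∀ p ∈ Ω, HasLineDerivAt ℝ u (v p) p ((1:ℝ), (0:ℝ)) := by
    intro p hp
    have h1 : HasDerivAt (fun t => u (t, p.2)) (v p) (p.1 + 0) := by
      rw [add_zero]; exact huslice p hp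
    have h2 : HasDerivAt (fun t : ℝ => p.1 + t) 1 0 := by
      simpa using (hasDerivAt_id (0:ℝ)).const_add p.1
    have h3 := h1.comp (0:ℝ) h2
    have heq : (fun t : ℝ => u (p + t • ((1:ℝ), (0:ℝ))))
        = ((fun t => u (t, p.2)) ∘ fun t : ℝ => p.1 + t) := by
      funext t
      simp only [Function.comp]
      congr 1
      ext <;> simp
    show HasDerivAt (fun t : ℝ => u (p + t • ((1:ℝ), (0:ℝ)))) (v p) 0
    rw [heq]
    simpa using h3
  have hline_v : ∀ p ∈ Ω, HasLineDerivAt ℝ v (u p) p ((0:ℝ), (1:ℝ)) := by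
    intro p hp
    have h0 : u (proj p) = u p := by rw [hprojid p (hΩR hp)]
    have h1 : HasDerivAt (fun s => v (p.1, s)) (u p) (p.2 + 0) := by
      rw [add_zero]; rw [← h0]; exact hvslice p
    have h2 : HasDerivAt (fun t : ℝ => p.2 + t) 1 0 := by
      simpa using (hasDerivAt_id (0:ℝ)).const_add p.2
    have h3 := h1.comp (0:ℝ) h2
    have heq : (fun t : ℝ => v (p + t • ((0:ℝ), (1:ℝ))))
        = ((fun s => v (p.1, s)) ∘ fun t : ℝ => p.2 + t) := by
      funext t
      simp only [Function.comp]
      congr 1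
      ext <;> simp
    show HasDerivAt (fun t : ℝ => v (p + t • ((0:ℝ), (1:ℝ)))) (u p) 0
    rw [heq]
    simpa using h3
  -- data conditions
  have hdata_u : ∀ x : ℝ, (x, b * x) ∈ Ω → u (x, b * x) = g x := by
    intro x hx
    have h1 := uEqR _ (hΩR hx)
    have hbx : b * x / b = x := by field_simp
    simp only at h1
    rw [h1, hbx, intervalIntegral.integral_same, add_zero]
    simp only [hg₀def]
    rw [hclid δ x ((hΩmem _).1 hx).1.le]
  have hdata_v : ∀ y : ℝ, (a * y, y) ∈ Ω → v (a * y, y) = h y := by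
    intro y hy
    have hay : a * y / a = y := by field_simp
    have h2 : v (a * y, y) = h₀ (a * y / a) + ∫ s in (a * y / a)..y, u (proj (a * y, s)) := rfl
    rw [h2, hay, intervalIntegral.integral_same, add_zero]
    simp only [hh₀def]
    have h3 : |y| ≤ δ / a := by
      have h4 : |a * y| < δ := ((hΩmem _).1 hy).1
      rw [abs_mul, abs_of_pos ha0] at h4
      rw [le_div_iff₀ ha0]
      linarith [h4]
    rw [hclid (δ/a) y h3]
    -- assemble the statement
  refine ⟨Ω, hΩopen, ?_, ?_, u, v, ⟨huC1, hvC1, hline_u, hline_v, hdata_u, hdata_v⟩, ?_⟩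
  · rw [hΩmem]
    simpa using ⟨hδ, hβ⟩
  · exact (Metric.isBounded_Ioo _ _).prod (Metric.isBounded_Ioo _ _)
  -- uniqueness
  rintro u' v' ⟨hu'C1, hv'C1, hu'x, hv'y, hu'g, hv'h⟩
  have hu'slice : ∀ p ∈ Ω, HasDerivAt (fun t => u' (t, p.2)) (v' p) p.1 := by
    intro p hp
    have H : HasDerivAt (fun t : ℝ => u' (p + t • ((1:ℝ), (0:ℝ)))) (v' p) (-p.1 + p.1) := by
      rw [neg_add_cancel]; exact hu'x p hp
    have h2 : HasDerivAt (fun x : ℝ => -p.1 + x) 1 p.1 := by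
      simpa using (hasDerivAt_id p.1).const_add (-p.1)
    have h3 := H.comp p.1 h2
    have heq : ((fun t : ℝ => u' (p + t • ((1:ℝ), (0:ℝ)))) ∘ fun x : ℝ => -p.1 + x)
        = fun t => u' (t, p.2) := by
      funext t
      simp only [Function.comp]
      congr 1
      rw [Prod.ext_iff]
      constructor <;> simp
    rw [heq] at h3
    simpa using h3
  have hv'slice : ∀ p ∈ Ω, HasDerivAt (fun s => v' (p.1, s)) (u' p) p.2 := by
    intro p hp
    have H : HasDerivAt (fun t : ℝ => v' (p + t • ((0:ℝ), (1:ℝ)))) (u' p) (-p.2 + p.2) := by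
      rw [neg_add_cancel]; exact hv'y p hp
    have h2 : HasDerivAt (fun x : ℝ => -p.2 + x) 1 p.2 := by
      simpa using (hasDerivAt_id p.2).const_add (-p.2)
    have h3 := H.comp p.2 h2
    have heq : ((fun t : ℝ => v' (p + t • ((0:ℝ), (1:ℝ)))) ∘ fun x : ℝ => -p.2 + x)
        = fun s => v' (p.1, s) := by
      funext t
      simp only [Function.comp]
      congr 1
      rw [Prod.ext_iff]
      constructor <;> simp
    rw [heq] at h3
    simpa using h3
  -- membership of integration paths
  have hmem1 : ∀ p ∈ Ω, ∀ t ∈ Set.uIcc (p.2/b) p.1, ((t, p.2) : ℝ × ℝ) ∈ Ω := by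
    intro p hp t ht
    obtain ⟨hp1, hp2⟩ := (hΩmem p).1 hp
    rw [hΩmem]
    refine ⟨?_, hp2⟩
    have ht' := abs_le_of_mem_uIcc ht (le_max_left |p.2/b| |p.1|) (le_max_right _ _)
    calc |t| ≤ max |p.2/b| |p.1| := ht'
      _ < δ := max_lt (hmapg p hp) hp1
  have hmem2 : ∀ p ∈ Ω, ∀ s ∈ Set.uIcc (p.1/a) p.2, ((p.1, s) : ℝ × ℝ) ∈ Ω := by
    intro p hp s hs
    obtain ⟨hp1, hp2⟩ := (hΩmem p).1 hp
    rw [hΩmem]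
    refine ⟨hp1, ?_⟩
    have hs' := abs_le_of_mem_uIcc hs (le_max_left |p.1/a| |p.2|) (le_max_right _ _)
    calc |s| ≤ max |p.1/a| |p.2| := hs'
      _ < β := max_lt (lt_trans (hmaph p hp) hδaβ) hp2
  -- integral equations for (u', v')
  have hequ' : ∀ p ∈ Ω, u' p = g (p.2/b) + ∫ t in (p.2/b)..p.1, v' (t, p.2) := by
    intro p hp
    have hder : ∀ t ∈ Set.uIcc (p.2/b) p.1, HasDerivAt (fun t => u' (t, p.2)) (v' (t, p.2)) t :=
      fun t ht => hu'slice (t, p.2) (hmem1 p hp t ht)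
    have hci : ContinuousOn (fun t => v' (t, p.2)) (Set.uIcc (p.2/b) p.1) := by
      apply hv'C1.continuousOn.comp
        (Continuous.continuousOn (continuous_id.prodMk continuous_const))
      intro t ht
      exact hmem1 p hp t ht
    have hFTC := intervalIntegral.integral_eq_sub_of_hasDerivAt hder hci.intervalIntegrable
    have hdata : u' (p.2/b, p.2) = g (p.2/b) := by
      have hb2 : b * (p.2/b) = p.2 := by field_simp
      have := hu'g (p.2/b) (by rw [hb2]; exact hmem1 p hp (p.2/b) Set.left_mem_uIcc)
      rwa [hb2] at this
    rw [hFTC, hdata]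
    simp
  have heqv' : ∀ p ∈ Ω, v' p = h (p.1/a) + ∫ s in (p.1/a)..p.2, u' (p.1, s) := by
    intro p hp
    have hder : ∀ s ∈ Set.uIcc (p.1/a) p.2, HasDerivAt (fun s => v' (p.1, s)) (u' (p.1, s)) s :=
      fun s hs => hv'slice (p.1, s) (hmem2 p hp s hs)
    have hci : ContinuousOn (fun s => u' (p.1, s)) (Set.uIcc (p.1/a) p.2) := by
      apply hu'C1.continuousOn.comp
        (Continuous.continuousOn (continuous_const.prodMk continuous_id))
      intro s hs
      exact hmem2 p hp s hs
    have hFTC := intervalIntegral.integral_eq_sub_of_hasDerivAt hder hci.intervalIntegrable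
    have hdata : v' (p.1, p.1/a) = h (p.1/a) := by
      have ha2 : a * (p.1/a) = p.1 := by field_simp
      have := hv'h (p.1/a) (by rw [ha2]; exact hmem2 p hp (p.1/a) Set.left_mem_uIcc)
      rwa [ha2] at this
    rw [hFTC, hdata]
    simp
  -- integral equations for (u, v)
  have hequ : ∀ p ∈ Ω, u p = g (p.2/b) + ∫ t in (p.2/b)..p.1, v (t, p.2) := by
    intro p hp
    rw [uEqR p (hΩR hp)]
    congr 1
    simp only [hg₀def]
    rw [hclid δ _ (hmapg p hp).le]
  have heqv : ∀ p ∈ Ω, v p = h (p.1/a) + ∫ s in (p.1/a)..p.2, u (p.1, s) := by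
    intro p hp
    have h2 : v p = h₀ (p.1/a) + ∫ s in (p.1/a)..p.2, u (proj (p.1, s)) := rfl
    rw [h2]
    congr 1
    · simp only [hh₀def]
      rw [hclid (δ/a) _ (hmaph p hp).le]
    · apply intervalIntegral.integral_congr
      intro s hs
      show u (proj (p.1, s)) = u (p.1, s)
      rw [hprojid _ (hΩR (hmem2 p hp s hs))]
  -- the contraction argument on compactly contained rectangles
  have key : ∀ p ∈ Ω, u p = u' p ∧ v p = v' p := by
    intro pb hpb
    obtain ⟨hpb1, hpb2⟩ := (hΩmem pb).1 hpb
    set d : ℝ := max (max |pb.1| (|pb.2|/b)) (δ/2) with hddef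
    have hd0 : 0 < d := lt_of_lt_of_le (by linarith) (le_max_right _ _)
    have hdδ : d < δ := by
      apply max_lt (max_lt hpb1 ?_) (by linarith)
      rw [div_lt_iff₀ hb0]
      calc |pb.2| < β := hpb2
        _ = δ * b := by rw [hβdef]; ring
    set K : Set (ℝ × ℝ) := Set.Icc (-d) d ×ˢ Set.Icc (-(b*d)) (b*d) with hKdef
    have hKmem : ∀ q : ℝ × ℝ, q ∈ K ↔ |q.1| ≤ d ∧ |q.2| ≤ b*d := by
      intro q
      simp only [hKdef, Set.mem_prod, Set.mem_Icc, abs_le]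
    have hKΩ : K ⊆ Ω := by
      intro q hq
      rw [hKmem] at hq
      rw [hΩmem]
      exact ⟨lt_of_le_of_lt hq.1 hdδ, lt_of_le_of_lt hq.2 (by rw [hβdef]; nlinarith)⟩
    have hpbK : pb ∈ K := by
      rw [hKmem]
      constructor
      · exact le_trans (le_max_left _ _) (le_max_left _ _)
      · have hle : |pb.2|/b ≤ d := le_trans (le_max_right _ _) (le_max_left _ _)
        rw [div_le_iff₀ hb0] at hle
        linarith
    have hKcomp : IsCompact K := isCompact_Icc.prod isCompact_Icc
    set w : ℝ × ℝ → ℝ := fun q => u q - u' q with hwdef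
    set z : ℝ × ℝ → ℝ := fun q => v q - v' q with hzdef
    have hwcont : ContinuousOn w K := ((hucont.continuousOn).sub hu'C1.continuousOn).mono hKΩ
    obtain ⟨q₀, hq₀K, hq₀max⟩ := hKcomp.exists_isMaxOn ⟨pb, hpbK⟩ hwcont.abs
    have hK1 : ∀ q ∈ K, ∀ t ∈ Set.uIcc (q.2/b) q.1, ((t, q.2) : ℝ × ℝ) ∈ K := by
      intro q hq t ht
      obtain ⟨h1, h2⟩ := (hKmem q).1 hq
      rw [hKmem]
      refine ⟨?_, h2⟩
      have hq2b : |q.2/b| ≤ d := by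
        rw [abs_div, abs_of_pos hb0, div_le_iff₀ hb0]
        nlinarith
      exact abs_le_of_mem_uIcc ht hq2b h1
    have hba : 1 < b * a := by
      rw [div_lt_iff₀ ha0] at hab
      linarith
    have hK2 : ∀ q ∈ K, ∀ s ∈ Set.uIcc (q.1/a) q.2, ((q.1, s) : ℝ × ℝ) ∈ K := by
      intro q hq s hs
      obtain ⟨h1, h2⟩ := (hKmem q).1 hq
      rw [hKmem]
      refine ⟨h1, ?_⟩
      have hq1a : |q.1/a| ≤ b*d := by
        rw [abs_div, abs_of_pos ha0, div_le_iff₀ ha0]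
        nlinarith [hd0.le]
      exact abs_le_of_mem_uIcc hs hq1a h2
    have hwq : ∀ q ∈ K, w q = ∫ t in (q.2/b)..q.1, z (t, q.2) := by
      intro q hq
      have hqΩ := hKΩ hq
      have hv'int : IntervalIntegrable (fun t => v' (t, q.2)) volume (q.2/b) q.1 := by
        apply ContinuousOn.intervalIntegrable
        apply hv'C1.continuousOn.comp
          (Continuous.continuousOn (continuous_id.prodMk continuous_const))
        intro t ht
        exact hmem1 q hqΩ t ht
      calc w q = u q - u' q := rfl
        _ = (g (q.2/b) + ∫ t in (q.2/b)..q.1, v (t, q.2))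
            - (g (q.2/b) + ∫ t in (q.2/b)..q.1, v' (t, q.2)) := by
              rw [← hequ q hqΩ, ← hequ' q hqΩ]
        _ = ∫ t in (q.2/b)..q.1, (v (t, q.2) - v' (t, q.2)) := by
              rw [intervalIntegral.integral_sub (hvsliceint q.2 _ _) hv'int]
              ring
        _ = ∫ t in (q.2/b)..q.1, z (t, q.2) := rfl
    have hzq : ∀ q ∈ K, z q = ∫ s in (q.1/a)..q.2, w (q.1, s) := by
      intro q hq
      have hqΩ := hKΩ hq
      have hu'int : IntervalIntegrable (fun s => u' (q.1, s)) volume (q.1/a) q.2 := by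
        apply ContinuousOn.intervalIntegrable
        apply hu'C1.continuousOn.comp
          (Continuous.continuousOn (continuous_const.prodMk continuous_id))
        intro s hs
        exact hmem2 q hqΩ s hs
      have huint' : IntervalIntegrable (fun s => u (q.1, s)) volume (q.1/a) q.2 :=
        (hucont.comp (continuous_const.prodMk continuous_id)).intervalIntegrable _ _
      calc z q = v q - v' q := rfl
        _ = (h (q.1/a) + ∫ s in (q.1/a)..q.2, u (q.1, s))
            - (h (q.1/a) + ∫ s in (q.1/a)..q.2, u' (q.1, s)) := by
              rw [← heqv q hqΩ, ← heqv' q hqΩ]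
        _ = ∫ s in (q.1/a)..q.2, (u (q.1, s) - u' (q.1, s)) := by
              rw [intervalIntegral.integral_sub huint' hu'int]
              ring
        _ = ∫ s in (q.1/a)..q.2, w (q.1, s) := rfl
    set W : ℝ := |w q₀| with hWdef
    have hWnn : 0 ≤ W := abs_nonneg _
    have hwle : ∀ q ∈ K, |w q| ≤ W := fun q hq => hq₀max hq
    have hzle : ∀ q ∈ K, |z q| ≤ 2*(b*d) * W := by
      intro q hq
      rw [hzq q hq]
      have hbd : ∀ s ∈ Set.uIoc (q.1/a) q.2, ‖w (q.1, s)‖ ≤ W := by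
        intro s hs
        rw [Real.norm_eq_abs]
        exact hwle _ (hK2 q hq s (Set.uIoc_subset_uIcc hs))
      have h5 := intervalIntegral.norm_integral_le_of_norm_le_const hbd
      obtain ⟨h1, h2⟩ := (hKmem q).1 hq
      have hq1a : |q.1/a| ≤ b*d := by
        rw [abs_div, abs_of_pos ha0, div_le_iff₀ ha0]
        nlinarith [hd0.le]
      have habs2 : |q.2 - q.1/a| ≤ |q.2| + |q.1/a| := by
        simpa [sub_eq_add_neg, abs_neg] using abs_add_le q.2 (-(q.1/a))
      calc |∫ s in (q.1/a)..q.2, w (q.1, s)| ≤ W * |q.2 - q.1/a| := by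
            simpa [Real.norm_eq_abs] using h5
        _ ≤ 2*(b*d) * W := by nlinarith [abs_nonneg (q.2 - q.1/a)]
    have hWle : W ≤ 2*d * (2*(b*d) * W) := by
      have hWint : W = |∫ t in (q₀.2/b)..q₀.1, z (t, q₀.2)| := by
        rw [hWdef, hwq q₀ hq₀K]
      have hbd : ∀ t ∈ Set.uIoc (q₀.2/b) q₀.1, ‖z (t, q₀.2)‖ ≤ 2*(b*d)*W := by
        intro t ht
        rw [Real.norm_eq_abs]
        exact hzle _ (hK1 q₀ hq₀K t (Set.uIoc_subset_uIcc ht))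
      have h5 := intervalIntegral.norm_integral_le_of_norm_le_const hbd
      obtain ⟨h1, h2⟩ := (hKmem q₀).1 hq₀K
      have hq2b : |q₀.2/b| ≤ d := by
        rw [abs_div, abs_of_pos hb0, div_le_iff₀ hb0]
        nlinarith
      have habs2 : |q₀.1 - q₀.2/b| ≤ |q₀.1| + |q₀.2/b| := by
        simpa [sub_eq_add_neg, abs_neg] using abs_add_le q₀.1 (-(q₀.2/b))
      have hz0 : (0:ℝ) ≤ 2*(b*d)*W := by positivity
      calc W = |∫ t in (q₀.2/b)..q₀.1, z (t, q₀.2)| := hWint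
        _ ≤ (2*(b*d)*W) * |q₀.1 - q₀.2/b| := by
            simpa [Real.norm_eq_abs] using h5
        _ ≤ 2*d * (2*(b*d) * W) := by nlinarith [abs_nonneg (q₀.1 - q₀.2/b)]
    have hW0 : W = 0 := by
      have hd2 : d^2 ≤ δ^2 := by nlinarith
      have h7 : W ≤ 4*b*δ^2*W := by
        nlinarith [mul_nonneg (mul_nonneg hb0.le (sub_nonneg.2 hd2)) hWnn]
      have h8 : W ≤ 0 := by nlinarith [h7, hk, hWnn]
      linarith
    have hwpb : w pb = 0 := by
      have := hwle pb hpbK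
      rw [hW0] at this
      exact abs_eq_zero.1 (le_antisymm this (abs_nonneg _))
    have hzpb : z pb = 0 := by
      have := hzle pb hpbK
      rw [hW0, mul_zero] at this
      exact abs_eq_zero.1 (le_antisymm this (abs_nonneg _))
    exact ⟨sub_eq_zero.1 hwpb, sub_eq_zero.1 hzpb⟩
  exact ⟨fun p hp => (key p hp).1, fun p hp => (key p hp).2⟩
end

section
/- Permuted accessibility lemma. Let 1 ≤ j ≤ p ≤ n and let Π : ℝⁿ → ℝⁿ be the coordinate permutation Π(t_1,…,t_n) := (t_{p−j+1},…,t_p, t_1,…,t_{p−j}, t_{p+1},…,t_n). If Θ ⊆ ℝⁿ is a p-accessible open neighborhood of the origin, then Π⁻¹(Θ) = {t ∈ ℝⁿ : Π(t) ∈ Θ} is a (p−j)-accessible open neighborhood of the origin. -/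
/-!
`Π` only reorders coordinates, so it is continuous and fixes the origin. For accessibility, the
coordinates `t_{p−j+1},…,t_p` that `Π` moves to the front are exactly the ones a
`(p−j)`-accessibility path never touches; hence `Π` carries the `m`-th segment of the
`(p−j)`-path of `t` onto the `(m+j)`-th segment of the `p`-path of `Π t`, which lies in `Θ`.
-/

/-- An open neighborhood `Θ ⊆ ℝⁿ` of the origin is `p`-accessible if for each
`t ∈ Θ` the piecewise linear path with vertices
`(0,…,0,t_{p+1},…,tₙ), (t₁,0,…,0,t_{p+1},…,tₙ), …, (t₁,…,tₙ)`
(filling the first `p` coordinates one at a time) lies entirely in `Θ`.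
Here (0-based) for `j < p` and `s ∈ [0,1]`, the point of the `j`-th segment keeps
coordinates `< j` of `t`, scales coordinate `j` by `s`, zeroes coordinates in
`(j, p)`, and keeps coordinates `≥ p`. -/
def PAccessible (n p : ℕ) (Θ : Set (Fin n → ℝ)) : Prop :=
  ∀ t ∈ Θ, ∀ j : ℕ, j < p → ∀ s ∈ Set.Icc (0 : ℝ) 1,
    (fun i : Fin n =>
      if i.val < j then t i
      else if i.val = j then s * t i
      else if i.val < p then 0
      else t i) ∈ Θ

namespace PAccessible

variable {n : ℕ}

def pathPoint (p : ℕ) (t : Fin n → ℝ) (j : ℕ) (s : ℝ) : Fin n → ℝ :=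
  fun i => if i.val < j then t i else if i.val = j then s * t i else if i.val < p then 0 else t i

theorem preimage {p q d : ℕ} {Θ : Set (Fin n → ℝ)} {f : (Fin n → ℝ) → (Fin n → ℝ)}
    (hΘ : PAccessible n p Θ) (hqdp : q + d ≤ p)
    (hf : ∀ t m s, m < q → f (pathPoint q t m s) = pathPoint p (f t) (m + d) s) :
    PAccessible n q (f ⁻¹' Θ) := fun t ht m hm s hs =>
  show f (pathPoint q t m s) ∈ Θ from hf t m s hm ▸ hΘ (f t) ht (m + d) (by omega) s hs

end PAccessible

open PAccessible

/-- `Π t = t ∘ rotateIndex p j _ _`. -/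
def rotateIndex {n : ℕ} (p j : ℕ) (hpn : p ≤ n) (hjp : j ≤ p) (k : Fin n) : Fin n :=
  if hkj : k.val < j then ⟨k.val + (p - j), by omega⟩
  else if k.val < p then ⟨k.val - j, (Nat.sub_le _ _).trans_lt k.isLt⟩
  else k

theorem val_rotateIndex {n : ℕ} (p j : ℕ) (hpn : p ≤ n) (hjp : j ≤ p) (k : Fin n) :
    (rotateIndex p j hpn hjp k).val =
      if k.val < j then k.val + (p - j) else if k.val < p then k.val - j else k.val := by
  unfold rotateIndex
  split_ifs <;> rfl

theorem pathPoint_comp_rotateIndex {n p j m : ℕ} (hpn : p ≤ n) (hjp : j ≤ p) (hm : m < p - j)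
    (t : Fin n → ℝ) (s : ℝ) :
    pathPoint (p - j) t m s ∘ rotateIndex p j hpn hjp =
      pathPoint p (t ∘ rotateIndex p j hpn hjp) (m + j) s := by
  funext k
  simp only [pathPoint, Function.comp_apply, val_rotateIndex]
  split_ifs <;> first | rfl | omega

/-- **Permuted accessibility lemma.**  Let `1 ≤ j ≤ p ≤ n` and let
`Π : ℝⁿ → ℝⁿ` be the coordinate permutation
`Π(t₁,…,tₙ) = (t_{p−j+1},…,t_p, t₁,…,t_{p−j}, t_{p+1},…,tₙ)`.
If `Θ ⊆ ℝⁿ` is a `p`-accessible open neighborhood of the origin, then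
`Π⁻¹(Θ)` is a `(p−j)`-accessible open neighborhood of the origin. -/
theorem permuted_accessibility
    (n p j : ℕ) (hjp : j ≤ p) (hpn : p ≤ n)
    (Pi' : (Fin n → ℝ) → (Fin n → ℝ))
    (hPi : ∀ (t : Fin n → ℝ) (k : Fin n),
      Pi' t k = if h1 : k.val < j then t ⟨k.val + (p - j), by omega⟩
        else if h2 : k.val < p then t ⟨k.val - j, by omega⟩
        else t k)
    (Θ : Set (Fin n → ℝ)) (hΘo : IsOpen Θ) (hΘ0 : (0 : Fin n → ℝ) ∈ Θ)
    (hΘacc : PAccessible n p Θ) :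
    IsOpen (Pi' ⁻¹' Θ) ∧ (0 : Fin n → ℝ) ∈ Pi' ⁻¹' Θ ∧
      PAccessible n (p - j) (Pi' ⁻¹' Θ) := by
  obtain rfl : Pi' = fun t => t ∘ rotateIndex p j hpn hjp := by
    funext t k
    rw [hPi, Function.comp_apply, rotateIndex]
    split_ifs <;> rfl
  have hcont : Continuous fun t : Fin n → ℝ => t ∘ rotateIndex p j hpn hjp :=
    continuous_pi fun k => continuous_apply _
  exact ⟨hcont.isOpen_preimage Θ hΘo, hΘ0,
    hΘacc.preimage (by omega) fun t m s hm => pathPoint_comp_rotateIndex hpn hjp hm t s⟩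
end
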